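/- arXiv:1401.0132 — 9 statements merged into one kernel-verified Lean document; each statement's English description precedes it below -/
import Mathlib

section
/- If X₁ ≤_hr X₂ and Y₂ ≤_hr Y₁, and γ₁(u) ≤ γ₂(u) and ω₁(u) = ω₂(u) for all u ≥ 0, then the series system V₂^s = min{X₁, X₂⊛Y₂, X₃, ..., Xₙ} is smaller in the usual stochastic order than V₁^s = min{X₁⊛Y₁, X₂, X₃, ..., Xₙ}. -/
/-!
A hazard-rate order X₁ ≤_hr X₂ gives, at the level of densities, `F̄_{X₁}(t) f_{X₂}(u) ≤
F̄_{X₂}(t) f_{X₁}(u)` for `u ≤ t`, while Y₂ ≤_hr Y₁ together with γ₁ ≤ γ₂ and ω₁ = ω₂ makes the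
conditional survival weight of the spare Y₂ at most that of Y₁. Multiplying the two comparisons
and integrating over `[0, t]` compares the standby parts of the two reliabilities, and the
remaining factors of the two series systems coincide.
-/

open MeasureTheory Set Filter Topology

lemma HasDerivAt.nonneg_of_eq_zero_of_nonneg_right {ψ : ℝ → ℝ} {a d : ℝ}
    (h : HasDerivAt ψ d a) (h0 : ψ a = 0) (hge : ∀ v, a < v → 0 ≤ ψ v) : 0 ≤ d := by
  have hslope : Tendsto (slope ψ a) (𝓝[>] a) (𝓝 d) :=
    (hasDerivAt_iff_tendsto_slope.mp h).mono_left (nhdsWithin_mono a fun _ hx => ne_of_gt hx)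
  refine ge_of_tendsto hslope ?_
  filter_upwards [self_mem_nhdsWithin] with x (hx : a < x)
  rw [slope_def_field, h0, sub_zero]
  exact div_nonneg (hge x hx) (sub_nonneg.2 hx.le)

section HazardRateOrder

variable {F G f g : ℝ → ℝ}

/-- The density form of `F ≤_hr G`: the hazard rate `g / G` is at most `f / F`. -/
lemma mul_le_mul_of_hazardRate_le (hF : ∀ u, HasDerivAt F (-f u) u)
    (hG : ∀ u, HasDerivAt G (-g u) u) (hhr : ∀ s t : ℝ, s ≤ t → G s * F t ≤ G t * F s) (u : ℝ) :
    g u * F u ≤ f u * G u := by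
  have hder : HasDerivAt (fun v => G v * F u - G u * F v) (-g u * F u - G u * -f u) u :=
    ((hG u).mul_const (F u)).sub ((hF u).const_mul (G u))
  have := hder.nonneg_of_eq_zero_of_nonneg_right (sub_self _)
    fun v hv => sub_nonneg.2 (hhr u v hv.le)
  linarith

lemma survival_mul_density_le_of_hazardRate_le (hF : ∀ u, HasDerivAt F (-f u) u)
    (hG : ∀ u, HasDerivAt G (-g u) u) (hhr : ∀ s t : ℝ, s ≤ t → G s * F t ≤ G t * F s)
    {u t : ℝ} (hut : u ≤ t) (hfu : 0 ≤ f u) (hFu : 0 < F u) (hFt : 0 ≤ F t) :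
    F t * g u ≤ G t * f u := by
  refine le_of_mul_le_mul_right ?_ hFu
  calc F t * g u * F u ≤ F t * (f u * G u) := by
        rw [mul_assoc]
        exact mul_le_mul_of_nonneg_left (mul_le_mul_of_hazardRate_le hF hG hhr u) hFt
    _ = f u * (G u * F t) := by ring
    _ ≤ f u * (G t * F u) := mul_le_mul_of_nonneg_left (hhr u t hut) hfu
    _ = G t * f u * F u := by ring

end HazardRateOrder

/-- The factor of `dF_X(u)` in the reliability of the standby system `X ⊛ Y` at time `t`,
where `S` is the survival function of `Y`. -/
noncomputable def standbyWeight (S γ ω : ℝ → ℝ) (t u : ℝ) : ℝ :=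
  S (t - (u - ω u)) / S (ω u) * S (γ u)

section StandbyWeight

variable {S γ ω : ℝ → ℝ} {t u : ℝ}

lemma standbyWeight_nonneg (hS : ∀ x ≥ 0, 0 < S x) (hγ : 0 ≤ γ u) (hω : 0 ≤ ω u)
    (hut : u ≤ t) : 0 ≤ standbyWeight S γ ω t u :=
  mul_nonneg (div_nonneg (hS _ (by linarith)).le (hS _ hω).le) (hS _ hγ).le

lemma standbyWeight_le (hS_anti : Antitone S) (hS : ∀ x ≥ 0, 0 < S x) (hγ : 0 ≤ γ u)
    (hω : 0 ≤ ω u ∧ ω u ≤ u) (hut : u ≤ t) :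
    standbyWeight S γ ω t u ≤ S 0 / S t * S 0 := by
  have hS0 : 0 ≤ S 0 := (hS 0 le_rfl).le
  exact mul_le_mul (div_le_div₀ hS0 (hS_anti (by linarith)) (hS t (by linarith))
    (hS_anti (by linarith))) (hS_anti hγ) (hS _ hγ).le (div_nonneg hS0 (hS t (by linarith)).le)

lemma aemeasurable_standbyWeight {μ : Measure ℝ} {s : Set ℝ} (hs : MeasurableSet s)
    (hs0 : s ⊆ Ici 0) (hS_anti : Antitone S) (hγ : MonotoneOn γ (Ici 0))
    (hω : MonotoneOn ω (Ici 0)) : AEMeasurable (standbyWeight S γ ω t) (μ.restrict s) := by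
  have hγm := aemeasurable_restrict_of_monotoneOn (μ := μ) hs (hγ.mono hs0)
  have hωm := aemeasurable_restrict_of_monotoneOn (μ := μ) hs (hω.mono hs0)
  exact ((hS_anti.measurable.comp_aemeasurable (aemeasurable_const.sub
    (aemeasurable_id.sub hωm))).div (hS_anti.measurable.comp_aemeasurable hωm)).mul
    (hS_anti.measurable.comp_aemeasurable hγm)

lemma intervalIntegrable_standbyWeight_mul {f : ℝ → ℝ} (ht : 0 ≤ t) (hS_anti : Antitone S)
    (hS : ∀ x ≥ 0, 0 < S x) (hγ_mono : MonotoneOn γ (Ici 0)) (hγ : ∀ u ≥ 0, 0 ≤ γ u)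
    (hω_mono : MonotoneOn ω (Ici 0)) (hω : ∀ u ≥ 0, 0 ≤ ω u ∧ ω u ≤ u)
    (hf : IntervalIntegrable f volume 0 t) :
    IntervalIntegrable (fun u => standbyWeight S γ ω t u * f u) volume 0 t := by
  rw [intervalIntegrable_iff_integrableOn_Ioc_of_le ht] at hf ⊢
  refine hf.bdd_mul (c := S 0 / S t * S 0) (aemeasurable_standbyWeight measurableSet_Ioc
    (Ioc_subset_Icc_self.trans Icc_subset_Ici_self) hS_anti hγ_mono hω_mono).aestronglyMeasurable ?_
  filter_upwards [ae_restrict_mem measurableSet_Ioc] with u ⟨hu0, hut⟩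
  rw [Real.norm_eq_abs, abs_of_nonneg (standbyWeight_nonneg hS (hγ u hu0.le) (hω u hu0.le).1 hut)]
  exact standbyWeight_le hS_anti hS (hγ u hu0.le) (hω u hu0.le) hut

lemma standbyWeight_le_of_hazardRate_le {S₁ S₂ γ₁ γ₂ : ℝ → ℝ} (hS₂_anti : Antitone S₂)
    (hS₁ : ∀ x ≥ 0, 0 < S₁ x) (hS₂ : ∀ x ≥ 0, 0 < S₂ x) (hS₁0 : S₁ 0 = 1) (hS₂0 : S₂ 0 = 1)
    (hhr : ∀ s t : ℝ, s ≤ t → S₁ s * S₂ t ≤ S₁ t * S₂ s) (hγ₁ : 0 ≤ γ₁ u) (hγ : γ₁ u ≤ γ₂ u)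
    (hω : 0 ≤ ω u) (hut : u ≤ t) :
    standbyWeight S₂ γ₂ ω t u ≤ standbyWeight S₁ γ₁ ω t u := by
  have hwa : ω u ≤ t - (u - ω u) := by linarith
  have hγ_st : S₂ (γ₁ u) ≤ S₁ (γ₁ u) := by simpa [hS₁0, hS₂0] using hhr 0 (γ₁ u) hγ₁
  have hratio : S₂ (t - (u - ω u)) / S₂ (ω u) ≤ S₁ (t - (u - ω u)) / S₁ (ω u) := by
    rw [div_le_div_iff₀ (hS₂ _ hω) (hS₁ _ hω)]
    linarith [hhr _ _ hwa]
  exact mul_le_mul hratio ((hS₂_anti hγ).trans hγ_st) (hS₂ _ (hγ₁.trans hγ)).le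
    (div_nonneg (hS₁ _ (hω.trans hwa)).le (hS₁ _ hω).le)

end StandbyWeight

lemma mul_integral_le_mul_integral {a b t : ℝ} {w₁ w₂ f₁ f₂ : ℝ → ℝ} (ht : 0 ≤ t)
    (hi₁ : IntervalIntegrable (fun u => w₁ u * f₁ u) volume 0 t)
    (hi₂ : IntervalIntegrable (fun u => w₂ u * f₂ u) volume 0 t)
    (hw₂ : ∀ u ∈ Icc 0 t, 0 ≤ w₂ u) (hw : ∀ u ∈ Icc 0 t, w₂ u ≤ w₁ u)
    (hf : ∀ u ∈ Icc 0 t, a * f₂ u ≤ b * f₁ u) (hbf : ∀ u ∈ Icc 0 t, 0 ≤ b * f₁ u) :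
    a * ∫ u in (0:ℝ)..t, w₂ u * f₂ u ≤ b * ∫ u in (0:ℝ)..t, w₁ u * f₁ u := by
  rw [← intervalIntegral.integral_const_mul, ← intervalIntegral.integral_const_mul]
  refine intervalIntegral.integral_mono_on ht (hi₂.const_mul a) (hi₁.const_mul b) fun u hu => ?_
  calc a * (w₂ u * f₂ u) = w₂ u * (a * f₂ u) := by ring
    _ ≤ w₂ u * (b * f₁ u) := mul_le_mul_of_nonneg_left (hf u hu) (hw₂ u hu)
    _ ≤ w₁ u * (b * f₁ u) := mul_le_mul_of_nonneg_right (hw u hu) (hbf u hu)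
    _ = b * (w₁ u * f₁ u) := by ring

theorem model_II_series_st_hr_case_i_general
    (SX1 SX2 SY1 SY2 SH fX1 fX2 : ℝ → ℝ) (γ1 γ2 ω1 ω2 : ℝ → ℝ)
    -- densities
    (hd1 : ∀ u, HasDerivAt SX1 (-(fX1 u)) u) (hd2 : ∀ u, HasDerivAt SX2 (-(fX2 u)) u)
    (hf1_nonneg : ∀ u, 0 ≤ fX1 u)
    (hf1_cont : Continuous fX1) (hf2_cont : Continuous fX2)
    -- survival functions of the nonnegative, absolutely continuous lifetimes
    (hSX1_pos : ∀ u ≥ 0, 0 < SX1 u) (hSX2_pos : ∀ u ≥ 0, 0 < SX2 u)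
    (hSY1_anti : Antitone SY1) (hSY2_anti : Antitone SY2)
    (hSY1_pos : ∀ u ≥ 0, 0 < SY1 u) (hSY2_pos : ∀ u ≥ 0, 0 < SY2 u)
    (hSY1_zero : SY1 0 = 1) (hSY2_zero : SY2 0 = 1)
    (hSH_nonneg : ∀ u, 0 ≤ SH u)
    -- model functions: increasing, 0 ≤ γᵢ(u) ≤ u and 0 ≤ ωᵢ(u) ≤ u
    (hγ1_mono : MonotoneOn γ1 (Set.Ici 0)) (hγ2_mono : MonotoneOn γ2 (Set.Ici 0))
    (hω2_mono : MonotoneOn ω2 (Set.Ici 0))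
    (hγ1_bd : ∀ u ≥ 0, 0 ≤ γ1 u ∧ γ1 u ≤ u) (hγ2_bd : ∀ u ≥ 0, 0 ≤ γ2 u ∧ γ2 u ≤ u)
    (hω2_bd : ∀ u ≥ 0, 0 ≤ ω2 u ∧ ω2 u ≤ u)
    -- X₁ ≤_hr X₂ : F̄_{X₂}/F̄_{X₁} increasing
    (hhrX : ∀ s t : ℝ, s ≤ t → SX2 s * SX1 t ≤ SX2 t * SX1 s)
    -- Y₂ ≤_hr Y₁ : F̄_{Y₁}/F̄_{Y₂} increasing
    (hhrY : ∀ s t : ℝ, s ≤ t → SY1 s * SY2 t ≤ SY1 t * SY2 s)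
    -- condition (i): γ₁ ≤ γ₂ and ω₁ = ω₂
    (hγle : ∀ u ≥ 0, γ1 u ≤ γ2 u) (hωeq : ∀ u ≥ 0, ω1 u = ω2 u) :
    -- conclusion: V₂ˢ ≤_st V₁ˢ
    ∀ t ≥ 0,
      SX1 t * (SX2 t + ∫ u in (0:ℝ)..t,
          (SY2 (t - (u - ω2 u)) / SY2 (ω2 u)) * SY2 (γ2 u) * fX2 u) * SH t ≤
      (SX1 t + ∫ u in (0:ℝ)..t,
          (SY1 (t - (u - ω1 u)) / SY1 (ω1 u)) * SY1 (γ1 u) * fX1 u) * SX2 t * SH t := by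
  intro t ht
  have hI1 : (∫ u in (0:ℝ)..t, (SY1 (t - (u - ω1 u)) / SY1 (ω1 u)) * SY1 (γ1 u) * fX1 u) =
      ∫ u in (0:ℝ)..t, standbyWeight SY1 γ1 ω2 t u * fX1 u :=
    intervalIntegral.integral_congr fun u hu => by
      rw [uIcc_of_le ht] at hu
      simp only [standbyWeight, hωeq u hu.1]
  have key : SX1 t * ∫ u in (0:ℝ)..t, standbyWeight SY2 γ2 ω2 t u * fX2 u ≤
      SX2 t * ∫ u in (0:ℝ)..t, standbyWeight SY1 γ1 ω2 t u * fX1 u :=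
    mul_integral_le_mul_integral ht
      (intervalIntegrable_standbyWeight_mul ht hSY1_anti hSY1_pos hγ1_mono
        (fun u hu => (hγ1_bd u hu).1) hω2_mono hω2_bd (hf1_cont.intervalIntegrable _ _))
      (intervalIntegrable_standbyWeight_mul ht hSY2_anti hSY2_pos hγ2_mono
        (fun u hu => (hγ2_bd u hu).1) hω2_mono hω2_bd (hf2_cont.intervalIntegrable _ _))
      (fun u hu => standbyWeight_nonneg hSY2_pos (hγ2_bd u hu.1).1 (hω2_bd u hu.1).1 hu.2)
      (fun u hu => standbyWeight_le_of_hazardRate_le hSY2_anti hSY1_pos hSY2_pos hSY1_zero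
        hSY2_zero hhrY (hγ1_bd u hu.1).1 (hγle u hu.1) (hω2_bd u hu.1).1 hu.2)
      (fun u hu => survival_mul_density_le_of_hazardRate_le hd1 hd2 hhrX hu.2 (hf1_nonneg u)
        (hSX1_pos u hu.1) (hSX1_pos t ht).le)
      (fun u _ => mul_nonneg (hSX2_pos t ht).le (hf1_nonneg u))
  rw [hI1]
  change SX1 t * (SX2 t + ∫ u in (0:ℝ)..t, standbyWeight SY2 γ2 ω2 t u * fX2 u) * SH t ≤ _
  linear_combination mul_le_mul_of_nonneg_right key (hSH_nonneg t)

theorem model_II_series_st_hr_case_i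
    (SX1 SX2 SY1 SY2 SH fX1 fX2 : ℝ → ℝ) (γ1 γ2 ω1 ω2 : ℝ → ℝ)
    -- densities
    (hd1 : ∀ u, HasDerivAt SX1 (-(fX1 u)) u) (hd2 : ∀ u, HasDerivAt SX2 (-(fX2 u)) u)
    (hf1_nonneg : ∀ u, 0 ≤ fX1 u) (hf2_nonneg : ∀ u, 0 ≤ fX2 u)
    (hf1_cont : Continuous fX1) (hf2_cont : Continuous fX2)
    -- survival functions of the nonnegative, absolutely continuous lifetimes
    (hSX1_pos : ∀ u ≥ 0, 0 < SX1 u) (hSX2_pos : ∀ u ≥ 0, 0 < SX2 u)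
    (hSY1_anti : Antitone SY1) (hSY2_anti : Antitone SY2)
    (hSY1_pos : ∀ u ≥ 0, 0 < SY1 u) (hSY2_pos : ∀ u ≥ 0, 0 < SY2 u)
    (hSY1_zero : SY1 0 = 1) (hSY2_zero : SY2 0 = 1)
    (hSH_nonneg : ∀ u, 0 ≤ SH u)
    -- model functions: increasing, 0 ≤ γᵢ(u) ≤ u and 0 ≤ ωᵢ(u) ≤ u
    (hγ1_mono : MonotoneOn γ1 (Set.Ici 0)) (hγ2_mono : MonotoneOn γ2 (Set.Ici 0))
    (hω1_mono : MonotoneOn ω1 (Set.Ici 0)) (hω2_mono : MonotoneOn ω2 (Set.Ici 0))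
    (hγ1_bd : ∀ u ≥ 0, 0 ≤ γ1 u ∧ γ1 u ≤ u) (hγ2_bd : ∀ u ≥ 0, 0 ≤ γ2 u ∧ γ2 u ≤ u)
    (hω1_bd : ∀ u ≥ 0, 0 ≤ ω1 u ∧ ω1 u ≤ u) (hω2_bd : ∀ u ≥ 0, 0 ≤ ω2 u ∧ ω2 u ≤ u)
    -- X₁ ≤_hr X₂ : F̄_{X₂}/F̄_{X₁} increasing
    (hhrX : ∀ s t : ℝ, s ≤ t → SX2 s * SX1 t ≤ SX2 t * SX1 s)
    -- Y₂ ≤_hr Y₁ : F̄_{Y₁}/F̄_{Y₂} increasing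
    (hhrY : ∀ s t : ℝ, s ≤ t → SY1 s * SY2 t ≤ SY1 t * SY2 s)
    -- condition (i): γ₁ ≤ γ₂ and ω₁ = ω₂
    (hγle : ∀ u ≥ 0, γ1 u ≤ γ2 u) (hωeq : ∀ u ≥ 0, ω1 u = ω2 u) :
    -- conclusion: V₂ˢ ≤_st V₁ˢ
    ∀ t ≥ 0,
      SX1 t * (SX2 t + ∫ u in (0:ℝ)..t,
          (SY2 (t - (u - ω2 u)) / SY2 (ω2 u)) * SY2 (γ2 u) * fX2 u) * SH t ≤
      (SX1 t + ∫ u in (0:ℝ)..t,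
          (SY1 (t - (u - ω1 u)) / SY1 (ω1 u)) * SY1 (γ1 u) * fX1 u) * SX2 t * SH t :=
  model_II_series_st_hr_case_i_general SX1 SX2 SY1 SY2 SH fX1 fX2 γ1 γ2 ω1 ω2 hd1 hd2 hf1_nonneg
    hf1_cont hf2_cont hSX1_pos hSX2_pos hSY1_anti hSY2_anti hSY1_pos hSY2_pos hSY1_zero hSY2_zero
    hSH_nonneg hγ1_mono hγ2_mono hω2_mono hγ1_bd hγ2_bd hω2_bd hhrX hhrY hγle hωeq
end

section
/- If X₁ ≤_hr X₂ and Y₂ ≤_hr Y₁, where Y₁ (or Y₂) has a log-concave survival function, ω₁(u) ≤ ω₂(u), and γ₁(u) ≤ γ₂(u) for all u ≥ 0, then V₂^s ≤_st V₁^s, where V₁^s = min{X₁⊛Y₁, X₂, X₃,...,Xₙ} and V₂^s = min{X₁, X₂⊛Y₂, X₃,...,Xₙ}. -/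
/-!
Both sides contain the term `F̄_{X₁}(t) F̄_{X₂}(t) F̄_H(t)` and `F̄_H(t) ≥ 0`, so it suffices to
compare the two integrands for `0 ≤ u ≤ t`. Since `X₁ ≤_hr X₂`, the hazard rates at `u` and the
ratio `F̄_{X₂}/F̄_{X₁}` on `[u, t]` give `F̄_{X₁}(t) f_{X₂}(u) ≤ F̄_{X₂}(t) f_{X₁}(u)`. For the
standby factors, `F̄_{Y₂}(γ₂ u) ≤ F̄_{Y₂}(γ₁ u) ≤ F̄_{Y₁}(γ₁ u)`, and the residual survival ratio
`F̄_Y(ω + (t - u)) / F̄_Y(ω)` increases from `Y₂` to `Y₁` (hazard rate order) and is antitone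
(log-concave case) or monotone (log-convex case) in `ω`, which is where the ordering of `ω₁` and
`ω₂` enters.
-/

open Set MeasureTheory Real

theorem ConcaveOn.add_le_add_of_le {s : Set ℝ} {f : ℝ → ℝ} (hf : ConcaveOn ℝ s f)
    {a b c : ℝ} (ha : a ∈ s) (hbc : b + c ∈ s) (hab : a ≤ b) (hc : 0 ≤ c) :
    f a + f (b + c) ≤ f b + f (a + c) := by
  rcases (add_nonneg (sub_nonneg.2 hab) hc).eq_or_lt with hd | hd
  · obtain ⟨rfl, rfl⟩ : b = a ∧ c = 0 := ⟨by linarith, by linarith⟩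
    simp
  · set d := b - a + c
    have hw : c / d + (b - a) / d = 1 := by field_simp; ring
    have hb := hf.2 ha hbc (div_nonneg hc hd.le) (div_nonneg (sub_nonneg.2 hab) hd.le) hw
    have hac := hf.2 ha hbc (div_nonneg (sub_nonneg.2 hab) hd.le) (div_nonneg hc hd.le)
      ((add_comm _ _).trans hw)
    have eb : c / d * a + (b - a) / d * (b + c) = b := by field_simp; ring
    have eac : (b - a) / d * a + c / d * (b + c) = a + c := by field_simp; ring
    simp only [smul_eq_mul, eb, eac] at hb hac
    linear_combination hb + hac - (f a + f (b + c)) * hw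

theorem div_le_div_of_log_add_le {w x y z : ℝ} (hw : 0 < w) (hx : 0 < x) (hy : 0 < y)
    (hz : 0 < z) (h : log w + log x ≤ log y + log z) : x / y ≤ z / w := by
  rw [div_le_div_iff₀ hy hw, ← log_le_log_iff (by positivity) (by positivity),
    log_mul hx.ne' hw.ne', log_mul hz.ne' hy.ne']
  linarith

section LogConcave

variable {s : Set ℝ} {S : ℝ → ℝ} {a b c : ℝ}

theorem div_le_div_of_concaveOn_log (hS : ∀ x ∈ s, 0 < S x)
    (hlog : ConcaveOn ℝ s fun x => log (S x)) (ha : a ∈ s) (hbc : b + c ∈ s) (hab : a ≤ b)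
    (hc : 0 ≤ c) : S (b + c) / S b ≤ S (a + c) / S a := by
  have hb : b ∈ s := hlog.1.ordConnected.out ha hbc ⟨hab, by linarith⟩
  have hac : a + c ∈ s := hlog.1.ordConnected.out ha hbc ⟨by linarith, by linarith⟩
  exact div_le_div_of_log_add_le (hS a ha) (hS _ hbc) (hS b hb) (hS _ hac)
    (hlog.add_le_add_of_le ha hbc hab hc)

theorem div_le_div_of_convexOn_log (hS : ∀ x ∈ s, 0 < S x)
    (hlog : ConvexOn ℝ s fun x => log (S x)) (ha : a ∈ s) (hbc : b + c ∈ s) (hab : a ≤ b)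
    (hc : 0 ≤ c) : S (a + c) / S a ≤ S (b + c) / S b := by
  have hb : b ∈ s := hlog.1.ordConnected.out ha hbc ⟨hab, by linarith⟩
  have hac : a + c ∈ s := hlog.1.ordConnected.out ha hbc ⟨by linarith, by linarith⟩
  have h := hlog.neg.add_le_add_of_le ha hbc hab hc
  simp only [Pi.neg_apply] at h
  exact div_le_div_of_log_add_le (hS b hb) (hS _ hac) (hS a ha) (hS _ hbc) (by linarith)

end LogConcave

theorem HasDerivAt.nonneg_of_forall_gt_le {g : ℝ → ℝ} {g' x : ℝ} (hg : HasDerivAt g g' x)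
    (hle : ∀ y, x < y → g x ≤ g y) : 0 ≤ g' := by
  have := (hasDerivWithinAt_iff_tendsto_slope' (s := Ioi x) (lt_irrefl x)).1
    hg.hasDerivWithinAt
  refine ge_of_tendsto this ?_
  filter_upwards [self_mem_nhdsWithin] with y hy
  rw [slope_def_field]
  exact div_nonneg (sub_nonneg.2 (hle y hy)) (sub_nonneg.2 (le_of_lt hy))

/-- `HazardRateLE S T`: the lifetime with survival function `S` is smaller in the hazard rate
order than the one with survival function `T`. -/
def HazardRateLE (S T : ℝ → ℝ) : Prop :=
  ∀ s t : ℝ, s ≤ t → T s * S t ≤ T t * S s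

namespace HazardRateLE

variable {S T : ℝ → ℝ} {a b c x : ℝ}

theorem div_le_div (h : HazardRateLE S T) (hS : 0 < S x) (hT : 0 < T x)
    (hc : 0 ≤ c) : S (x + c) / S x ≤ T (x + c) / T x := by
  rw [div_le_div_iff₀ hS hT]
  linarith [h x (x + c) (by linarith)]

theorem le_of_apply_zero (h : HazardRateLE S T) (h0 : S 0 = T 0) (hT0 : 0 < T 0) (hx : 0 ≤ x) :
    S x ≤ T x := by
  have := h 0 x hx
  rw [h0] at this
  exact le_of_mul_le_mul_left (by linarith) hT0

theorem density_mul_le (h : HazardRateLE S T) {f g : ℝ} (hS : HasDerivAt S (-f) x)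
    (hT : HasDerivAt T (-g) x) : g * S x ≤ f * T x := by
  have hD : HasDerivAt (fun y => T y * S x - T x * S y) (-g * S x - T x * -f) x :=
    (hT.mul_const (S x)).sub (hS.const_mul (T x))
  have := hD.nonneg_of_forall_gt_le fun y hy => by linarith [h x y hy.le]
  linarith

theorem mul_density_le (h : HazardRateLE S T) {f g y : ℝ} (hS : HasDerivAt S (-f) x)
    (hT : HasDerivAt T (-g) x) (hSx : 0 < S x) (hTx : 0 < T x) (hSy : 0 ≤ S y) (hf : 0 ≤ f)
    (hxy : x ≤ y) : S y * g ≤ T y * f := by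
  have hprod := mul_le_mul (h.density_mul_le hS hT) (h x y hxy) (by positivity) (by positivity)
  refine le_of_mul_le_mul_right ?_ (mul_pos hSx hTx)
  linarith

theorem div_le_div_of_concaveOn_log (h : HazardRateLE S T) (hS : ∀ x ≥ 0, 0 < S x)
    (hT : ∀ x ≥ 0, 0 < T x)
    (hlog : ConcaveOn ℝ (Ici 0) (fun x => log (T x)) ∨ ConcaveOn ℝ (Ici 0) (fun x => log (S x)))
    (hb : 0 ≤ b) (hba : b ≤ a) (hc : 0 ≤ c) : S (a + c) / S a ≤ T (b + c) / T b := by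
  have ha : 0 ≤ a := hb.trans hba
  have hac : a + c ∈ Ici (0 : ℝ) := add_nonneg ha hc
  rcases hlog with hlogT | hlogS
  · exact (h.div_le_div (hS a ha) (hT a ha) hc).trans
      (_root_.div_le_div_of_concaveOn_log hT hlogT hb hac hba hc)
  · exact (_root_.div_le_div_of_concaveOn_log hS hlogS hb hac hba hc).trans
      (h.div_le_div (hS b hb) (hT b hb) hc)

theorem div_le_div_of_convexOn_log (h : HazardRateLE S T) (hS : ∀ x ≥ 0, 0 < S x)
    (hT : ∀ x ≥ 0, 0 < T x)
    (hlog : ConvexOn ℝ (Ici 0) (fun x => log (T x)) ∨ ConvexOn ℝ (Ici 0) (fun x => log (S x)))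
    (ha : 0 ≤ a) (hab : a ≤ b) (hc : 0 ≤ c) : S (a + c) / S a ≤ T (b + c) / T b := by
  have hb : 0 ≤ b := ha.trans hab
  have hbc : b + c ∈ Ici (0 : ℝ) := add_nonneg hb hc
  rcases hlog with hlogT | hlogS
  · exact (h.div_le_div (hS a ha) (hT a ha) hc).trans
      (_root_.div_le_div_of_convexOn_log hT hlogT ha hbc hab hc)
  · exact (_root_.div_le_div_of_convexOn_log hS hlogS ha hbc hab hc).trans
      (h.div_le_div (hS b hb) (hT b hb) hc)

end HazardRateLE

theorem integrableOn_of_hasDerivAt_neg {F f : ℝ → ℝ} (hF : ∀ x, HasDerivAt F (-f x) x)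
    (hf : ∀ x, 0 ≤ f x) (a b : ℝ) : IntegrableOn f (Ioc a b) :=
  intervalIntegral.integrableOn_deriv_of_nonneg (g := -F)
    (fun x _ => (hF x).continuousAt.neg.continuousWithinAt)
    (fun x _ => by simpa using (hF x).neg) (fun x _ => hf x)

theorem intervalIntegral.integral_mono_of_nonneg_of_integrableOn {f g : ℝ → ℝ} {a b : ℝ}
    (hab : a ≤ b) (hf : ∀ x ∈ Ioc a b, 0 ≤ f x) (hg : IntegrableOn g (Ioc a b))
    (hfg : ∀ x ∈ Ioc a b, f x ≤ g x) : ∫ x in a..b, f x ≤ ∫ x in a..b, g x := by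
  rw [intervalIntegral.integral_of_le hab, intervalIntegral.integral_of_le hab]
  exact integral_mono_of_nonneg (ae_restrict_of_forall_mem measurableSet_Ioc hf) hg
    (ae_restrict_of_forall_mem measurableSet_Ioc hfg)

noncomputable def standbyFactor (SY ω γ : ℝ → ℝ) (t u : ℝ) : ℝ :=
  SY (t - (u - ω u)) / SY (ω u) * SY (γ u)

section StandbyFactor

variable {SY ω γ : ℝ → ℝ} {t u : ℝ}

theorem standbyFactor_nonneg (hSY : ∀ x ≥ 0, 0 ≤ SY x) (hω : 0 ≤ ω u) (hγ : 0 ≤ γ u)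
    (hut : u ≤ t) : 0 ≤ standbyFactor SY ω γ t u :=
  mul_nonneg (div_nonneg (hSY _ (by linarith)) (hSY _ hω)) (hSY _ hγ)

theorem standbyFactor_le (hSY_anti : Antitone SY) (hSY : ∀ x ≥ 0, 0 ≤ SY x) (hω : 0 ≤ ω u)
    (hγ : 0 ≤ γ u) (hut : u ≤ t) : standbyFactor SY ω γ t u ≤ SY 0 :=
  (mul_le_of_le_one_left (hSY _ hγ)
    (div_le_one_of_le₀ (hSY_anti (by linarith)) (hSY _ hω))).trans (hSY_anti hγ)

theorem integrableOn_standbyFactor_mul {fX : ℝ → ℝ} (hSY_anti : Antitone SY)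
    (hSY : ∀ x ≥ 0, 0 ≤ SY x) (hω_mono : MonotoneOn ω (Ici 0)) (hγ_mono : MonotoneOn γ (Ici 0))
    (hω : ∀ u ≥ 0, 0 ≤ ω u) (hγ : ∀ u ≥ 0, 0 ≤ γ u) (hfX : IntegrableOn fX (Ioc 0 t)) :
    IntegrableOn (fun u => standbyFactor SY ω γ t u * fX u) (Ioc 0 t) := by
  have hsub : Ioc 0 t ⊆ Ici (0 : ℝ) := fun u hu => hu.1.le
  have hω' : AEMeasurable ω (volume.restrict (Ioc 0 t)) :=
    aemeasurable_restrict_of_monotoneOn measurableSet_Ioc (hω_mono.mono hsub)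
  have hγ' : AEMeasurable γ (volume.restrict (Ioc 0 t)) :=
    aemeasurable_restrict_of_monotoneOn measurableSet_Ioc (hγ_mono.mono hsub)
  have hmeas : AEMeasurable (standbyFactor SY ω γ t) (volume.restrict (Ioc 0 t)) := by
    have := hSY_anti.measurable
    unfold standbyFactor
    fun_prop
  refine hfX.bdd_mul hmeas.aestronglyMeasurable (c := SY 0) ?_
  filter_upwards [ae_restrict_mem measurableSet_Ioc] with u ⟨hu0, hut⟩
  rw [Real.norm_of_nonneg (standbyFactor_nonneg hSY (hω u hu0.le) (hγ u hu0.le) hut)]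
  exact standbyFactor_le hSY_anti hSY (hω u hu0.le) (hγ u hu0.le) hut

end StandbyFactor

theorem standbyFactor_le_standbyFactor {SY1 SY2 ω1 ω2 γ1 γ2 : ℝ → ℝ} {t u : ℝ}
    (hY : HazardRateLE SY2 SY1) (hSY1 : ∀ x ≥ 0, 0 < SY1 x) (hSY2 : ∀ x ≥ 0, 0 < SY2 x)
    (hSY2_anti : Antitone SY2) (h0 : SY2 0 = SY1 0) (hω1 : 0 ≤ ω1 u) (hω2 : 0 ≤ ω2 u)
    (hγ1 : 0 ≤ γ1 u) (hγ : γ1 u ≤ γ2 u) (hut : u ≤ t)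
    (hcond : ((ConcaveOn ℝ (Ici 0) (fun x => log (SY1 x)) ∨
        ConcaveOn ℝ (Ici 0) (fun x => log (SY2 x))) ∧ ω1 u ≤ ω2 u) ∨
      ((ConvexOn ℝ (Ici 0) (fun x => log (SY1 x)) ∨
        ConvexOn ℝ (Ici 0) (fun x => log (SY2 x))) ∧ ω2 u ≤ ω1 u)) :
    standbyFactor SY2 ω2 γ2 t u ≤ standbyFactor SY1 ω1 γ1 t u := by
  have hc : 0 ≤ t - u := sub_nonneg.2 hut
  have hratio : SY2 (ω2 u + (t - u)) / SY2 (ω2 u) ≤ SY1 (ω1 u + (t - u)) / SY1 (ω1 u) := by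
    rcases hcond with ⟨hlog, hω⟩ | ⟨hlog, hω⟩
    · exact hY.div_le_div_of_concaveOn_log hSY2 hSY1 hlog hω1 hω hc
    · exact hY.div_le_div_of_convexOn_log hSY2 hSY1 hlog hω2 hω hc
  have htail : SY2 (γ2 u) ≤ SY1 (γ1 u) :=
    (hSY2_anti hγ).trans (hY.le_of_apply_zero h0 (hSY1 0 le_rfl) hγ1)
  unfold standbyFactor
  simp only [show ∀ ω : ℝ, t - (u - ω) = ω + (t - u) from fun ω => by ring]
  exact mul_le_mul hratio htail (hSY2 _ (hγ1.trans hγ)).le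
    (div_nonneg (hSY1 _ (by linarith)).le (hSY1 _ hω1).le)

theorem model_II_series_st_hr_case_ii_general
    (SX1 SX2 SY1 SY2 SH fX1 fX2 : ℝ → ℝ) (γ1 γ2 ω1 ω2 : ℝ → ℝ)
    -- densities
    (hd1 : ∀ u, HasDerivAt SX1 (-(fX1 u)) u) (hd2 : ∀ u, HasDerivAt SX2 (-(fX2 u)) u)
    (hf1_nonneg : ∀ u, 0 ≤ fX1 u) (hf2_nonneg : ∀ u, 0 ≤ fX2 u)
    -- survival functions of the nonnegative, absolutely continuous lifetimes
    (hSX1_pos : ∀ u ≥ 0, 0 < SX1 u) (hSX2_pos : ∀ u ≥ 0, 0 < SX2 u)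
    (hSY1_anti : Antitone SY1) (hSY2_anti : Antitone SY2)
    (hSY1_pos : ∀ u ≥ 0, 0 < SY1 u) (hSY2_pos : ∀ u ≥ 0, 0 < SY2 u)
    (hSY1_zero : SY1 0 = 1) (hSY2_zero : SY2 0 = 1)
    (hSH_nonneg : ∀ u, 0 ≤ SH u)
    -- model functions: increasing, 0 ≤ γᵢ(u) ≤ u and 0 ≤ ωᵢ(u) ≤ u
    (hγ1_mono : MonotoneOn γ1 (Set.Ici 0))
    (hω1_mono : MonotoneOn ω1 (Set.Ici 0))
    (hγ1_bd : ∀ u ≥ 0, 0 ≤ γ1 u ∧ γ1 u ≤ u) (hγ2_bd : ∀ u ≥ 0, 0 ≤ γ2 u ∧ γ2 u ≤ u)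
    (hω1_bd : ∀ u ≥ 0, 0 ≤ ω1 u ∧ ω1 u ≤ u) (hω2_bd : ∀ u ≥ 0, 0 ≤ ω2 u ∧ ω2 u ≤ u)
    -- X₁ ≤_hr X₂ : F̄_{X₂}/F̄_{X₁} increasing
    (hhrX : ∀ s t : ℝ, s ≤ t → SX2 s * SX1 t ≤ SX2 t * SX1 s)
    -- Y₂ ≤_hr Y₁ : F̄_{Y₁}/F̄_{Y₂} increasing
    (hhrY : ∀ s t : ℝ, s ≤ t → SY1 s * SY2 t ≤ SY1 t * SY2 s)
    -- condition (ii): Y₁ or Y₂ has a log-concave (log-convex) survival function and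
    -- ω₁ ≤ ω₂ (resp. ω₁ ≥ ω₂); in both cases γ₁ ≤ γ₂
    (hγle : ∀ u ≥ 0, γ1 u ≤ γ2 u)
    (hcase :
      ((ConcaveOn ℝ (Set.Ici 0) (fun u => Real.log (SY1 u)) ∨
        ConcaveOn ℝ (Set.Ici 0) (fun u => Real.log (SY2 u))) ∧ ∀ u ≥ 0, ω1 u ≤ ω2 u) ∨
      ((ConvexOn ℝ (Set.Ici 0) (fun u => Real.log (SY1 u)) ∨
        ConvexOn ℝ (Set.Ici 0) (fun u => Real.log (SY2 u))) ∧ ∀ u ≥ 0, ω2 u ≤ ω1 u)) :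
    -- conclusion: V₂ˢ ≤_st V₁ˢ
    ∀ t ≥ 0,
      SX1 t * (SX2 t + ∫ u in (0:ℝ)..t,
          (SY2 (t - (u - ω2 u)) / SY2 (ω2 u)) * SY2 (γ2 u) * fX2 u) * SH t ≤
      (SX1 t + ∫ u in (0:ℝ)..t,
          (SY1 (t - (u - ω1 u)) / SY1 (ω1 u)) * SY1 (γ1 u) * fX1 u) * SX2 t * SH t := by
  intro t ht
  have hSY1 : ∀ x ≥ 0, 0 ≤ SY1 x := fun x hx => (hSY1_pos x hx).le
  have hSY2 : ∀ x ≥ 0, 0 ≤ SY2 x := fun x hx => (hSY2_pos x hx).le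
  have hint : IntegrableOn (fun u => standbyFactor SY1 ω1 γ1 t u * fX1 u) (Ioc 0 t) :=
    integrableOn_standbyFactor_mul hSY1_anti hSY1 hω1_mono hγ1_mono
      (fun u hu => (hω1_bd u hu).1) (fun u hu => (hγ1_bd u hu).1)
      (integrableOn_of_hasDerivAt_neg hd1 hf1_nonneg 0 t)
  have key : SX1 t * ∫ u in (0:ℝ)..t, (SY2 (t - (u - ω2 u)) / SY2 (ω2 u)) * SY2 (γ2 u) * fX2 u
      ≤ SX2 t * ∫ u in (0:ℝ)..t, (SY1 (t - (u - ω1 u)) / SY1 (ω1 u)) * SY1 (γ1 u) * fX1 u := by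
    rw [← intervalIntegral.integral_const_mul, ← intervalIntegral.integral_const_mul]
    refine intervalIntegral.integral_mono_of_nonneg_of_integrableOn ht (fun u ⟨hu0, hut⟩ => ?_)
      (hint.const_mul _) (fun u ⟨hu0, hut⟩ => ?_)
    · exact mul_nonneg (hSX1_pos t ht).le (mul_nonneg (standbyFactor_nonneg hSY2
        (hω2_bd u hu0.le).1 (hγ2_bd u hu0.le).1 hut) (hf2_nonneg u))
    · have hfactor := standbyFactor_le_standbyFactor hhrY hSY1_pos hSY2_pos hSY2_anti
        (hSY2_zero.trans hSY1_zero.symm) (hω1_bd u hu0.le).1 (hω2_bd u hu0.le).1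
        (hγ1_bd u hu0.le).1 (hγle u hu0.le) hut
        (hcase.imp (And.imp_right (· u hu0.le)) (And.imp_right (· u hu0.le)))
      have hdensity : SX1 t * fX2 u ≤ SX2 t * fX1 u :=
        HazardRateLE.mul_density_le hhrX (hd1 u) (hd2 u) (hSX1_pos u hu0.le)
          (hSX2_pos u hu0.le) (hSX1_pos t ht).le (hf1_nonneg u) hut
      have := mul_le_mul hfactor hdensity (mul_nonneg (hSX1_pos t ht).le (hf2_nonneg u))
        (standbyFactor_nonneg hSY1 (hω1_bd u hu0.le).1 (hγ1_bd u hu0.le).1 hut)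
      unfold standbyFactor at this
      linarith
  have hst := add_le_add_left key (SX1 t * SX2 t)
  exact mul_le_mul_of_nonneg_right (by linarith) (hSH_nonneg t)

theorem model_II_series_st_hr_case_ii
    (SX1 SX2 SY1 SY2 SH fX1 fX2 : ℝ → ℝ) (γ1 γ2 ω1 ω2 : ℝ → ℝ)
    -- densities
    (hd1 : ∀ u, HasDerivAt SX1 (-(fX1 u)) u) (hd2 : ∀ u, HasDerivAt SX2 (-(fX2 u)) u)
    (hf1_nonneg : ∀ u, 0 ≤ fX1 u) (hf2_nonneg : ∀ u, 0 ≤ fX2 u)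
    (hf1_cont : Continuous fX1) (hf2_cont : Continuous fX2)
    -- survival functions of the nonnegative, absolutely continuous lifetimes
    (hSX1_pos : ∀ u ≥ 0, 0 < SX1 u) (hSX2_pos : ∀ u ≥ 0, 0 < SX2 u)
    (hSY1_anti : Antitone SY1) (hSY2_anti : Antitone SY2)
    (hSY1_pos : ∀ u ≥ 0, 0 < SY1 u) (hSY2_pos : ∀ u ≥ 0, 0 < SY2 u)
    (hSY1_zero : SY1 0 = 1) (hSY2_zero : SY2 0 = 1)
    (hSH_nonneg : ∀ u, 0 ≤ SH u)
    -- model functions: increasing, 0 ≤ γᵢ(u) ≤ u and 0 ≤ ωᵢ(u) ≤ u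
    (hγ1_mono : MonotoneOn γ1 (Set.Ici 0)) (hγ2_mono : MonotoneOn γ2 (Set.Ici 0))
    (hω1_mono : MonotoneOn ω1 (Set.Ici 0)) (hω2_mono : MonotoneOn ω2 (Set.Ici 0))
    (hγ1_bd : ∀ u ≥ 0, 0 ≤ γ1 u ∧ γ1 u ≤ u) (hγ2_bd : ∀ u ≥ 0, 0 ≤ γ2 u ∧ γ2 u ≤ u)
    (hω1_bd : ∀ u ≥ 0, 0 ≤ ω1 u ∧ ω1 u ≤ u) (hω2_bd : ∀ u ≥ 0, 0 ≤ ω2 u ∧ ω2 u ≤ u)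
    -- X₁ ≤_hr X₂ : F̄_{X₂}/F̄_{X₁} increasing
    (hhrX : ∀ s t : ℝ, s ≤ t → SX2 s * SX1 t ≤ SX2 t * SX1 s)
    -- Y₂ ≤_hr Y₁ : F̄_{Y₁}/F̄_{Y₂} increasing
    (hhrY : ∀ s t : ℝ, s ≤ t → SY1 s * SY2 t ≤ SY1 t * SY2 s)
    -- condition (ii): Y₁ or Y₂ has a log-concave (log-convex) survival function and
    -- ω₁ ≤ ω₂ (resp. ω₁ ≥ ω₂); in both cases γ₁ ≤ γ₂
    (hγle : ∀ u ≥ 0, γ1 u ≤ γ2 u)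
    (hcase :
      ((ConcaveOn ℝ (Set.Ici 0) (fun u => Real.log (SY1 u)) ∨
        ConcaveOn ℝ (Set.Ici 0) (fun u => Real.log (SY2 u))) ∧ ∀ u ≥ 0, ω1 u ≤ ω2 u) ∨
      ((ConvexOn ℝ (Set.Ici 0) (fun u => Real.log (SY1 u)) ∨
        ConvexOn ℝ (Set.Ici 0) (fun u => Real.log (SY2 u))) ∧ ∀ u ≥ 0, ω2 u ≤ ω1 u)) :
    -- conclusion: V₂ˢ ≤_st V₁ˢ
    ∀ t ≥ 0,
      SX1 t * (SX2 t + ∫ u in (0:ℝ)..t,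
          (SY2 (t - (u - ω2 u)) / SY2 (ω2 u)) * SY2 (γ2 u) * fX2 u) * SH t ≤
      (SX1 t + ∫ u in (0:ℝ)..t,
          (SY1 (t - (u - ω1 u)) / SY1 (ω1 u)) * SY1 (γ1 u) * fX1 u) * SX2 t * SH t :=
  model_II_series_st_hr_case_ii_general SX1 SX2 SY1 SY2 SH fX1 fX2 γ1 γ2 ω1 ω2 hd1 hd2 hf1_nonneg
    hf2_nonneg hSX1_pos hSX2_pos hSY1_anti hSY2_anti hSY1_pos hSY2_pos hSY1_zero hSY2_zero
    hSH_nonneg hγ1_mono hω1_mono hγ1_bd hγ2_bd hω1_bd hω2_bd hhrX hhrY hγle hcase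
end

section
/- With the notation of Model II, if γ₁(u) ≤ γ₂(u) for all u ≥ 0, X₁ ≤_st X₂, and Y₂ ≤_st Y₁, then P(V₁^s > V₂^s) ≥ P(V₂^s > V₁^s), i.e., V₂^s ≤_sp V₁^s. Here P(V₁^s > V₂^s) = P(Y₁* > X₁, X₂ > X₁, H₁ > X₁) where H₁ = min{X₃,...,Xₙ} and Y_i* has survival function F̄_{Y_i}(γ_i(·)). -/
open MeasureTheory ProbabilityTheory Set
open scoped ENNReal

/-! Write `F̄` for survival functions. Conditioning on `X₂`, resp. `X₁`,
`P(V₂ˢ > V₁ˢ) = E[(F̄_{Y₂*} F̄_{X₁} F̄_{H₁})(X₂)]` and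
`P(V₁ˢ > V₂ˢ) = E[(F̄_{Y₁*} F̄_{X₂} F̄_{H₁})(X₁)]`. Since `γ₁ ≤ γ₂` and `Y₂ ≤_st Y₁`,
`F̄_{Y₂*} ≤ F̄_{Y₁*}`; so for the decreasing `g = F̄_{Y₁*} F̄_{H₁}` it suffices that
`E[g(Y) 1{X > Y}] ≤ E[g(X) 1{Y > X}]` for independent `X ≤_st Y`. Both sides compare with
`E[g(Y) 1{Y' > Y}]`, `Y'` an independent copy of `Y`: replacing `X` by `Y'` integrates the
increasing function `y ↦ E[g(Y) 1{Y < y}]`, and replacing `Y` by `X` integrates the decreasing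
function `g F̄_Y`. -/

theorem lintegral_eq_lintegral_measure_lt_toReal {α : Type*} [MeasurableSpace α]
    (κ : Measure α) {f : α → ℝ≥0∞} (hf : Measurable f) (hf_top : ∀ x, f x ≠ ∞) :
    ∫⁻ x, f x ∂κ = ∫⁻ t in Ioi 0, κ {x | t < (f x).toReal} := by
  conv_lhs => rw [← lintegral_congr fun x => ENNReal.ofReal_toReal (hf_top x)]
  exact lintegral_eq_lintegral_meas_lt κ (ae_of_all _ fun _ => ENNReal.toReal_nonneg)
    hf.ennreal_toReal.aemeasurable

theorem lintegral_mul_measure_Ioi_eq (μ ν : Measure ℝ) [SFinite μ] [SFinite ν]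
    {g : ℝ → ℝ≥0∞} (hg : Measurable g) :
    ∫⁻ x, g x * ν (Ioi x) ∂μ = ∫⁻ y, ∫⁻ x in Iio y, g x ∂μ ∂ν := by
  set F : ℝ × ℝ → ℝ≥0∞ := {p | p.1 < p.2}.indicator fun p => g p.1
  have hF : Measurable F :=
    (hg.comp measurable_fst).indicator (measurableSet_lt measurable_fst measurable_snd)
  calc ∫⁻ x, g x * ν (Ioi x) ∂μ = ∫⁻ x, ∫⁻ y, F (x, y) ∂ν ∂μ := by
        congr with x
        rw [← lintegral_indicator_const measurableSet_Ioi]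
        rfl
    _ = ∫⁻ y, ∫⁻ x, F (x, y) ∂μ ∂ν := lintegral_lintegral_swap hF.aemeasurable
    _ = ∫⁻ y, ∫⁻ x in Iio y, g x ∂μ ∂ν := by
        congr with y
        rw [← lintegral_indicator measurableSet_Iio]
        rfl

/-- The usual stochastic order `μ ≤_st ν` of laws on `ℝ`. -/
def StochasticLE (μ ν : Measure ℝ) : Prop :=
  ∀ t, μ (Ioi t) ≤ ν (Ioi t)

theorem stochasticLE_map_iff {Ω : Type*} [MeasurableSpace Ω] {P : Measure Ω} {X Y : Ω → ℝ}
    (hX : Measurable X) (hY : Measurable Y) :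
    StochasticLE (P.map X) (P.map Y) ↔ ∀ t, P {ω | X ω > t} ≤ P {ω | Y ω > t} := by
  simp only [StochasticLE, Measure.map_apply hX measurableSet_Ioi,
    Measure.map_apply hY measurableSet_Ioi]
  rfl

theorem stochasticLE_map_of_nonneg {Ω : Type*} [MeasurableSpace Ω] {P : Measure Ω}
    [IsProbabilityMeasure P] {X Y : Ω → ℝ} (hX : Measurable X) (hY : Measurable Y)
    (hY_nonneg : ∀ ω, 0 ≤ Y ω) (h : ∀ t ≥ 0, P {ω | X ω > t} ≤ P {ω | Y ω > t}) :
    StochasticLE (P.map X) (P.map Y) := by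
  refine (stochasticLE_map_iff hX hY).2 fun t => ?_
  rcases le_or_gt 0 t with ht | ht
  · exact h t ht
  · rw [show {ω | Y ω > t} = univ from eq_univ_of_forall fun ω => ht.trans_le (hY_nonneg ω),
      measure_univ]
    exact prob_le_one

namespace StochasticLE

variable {μ ν : Measure ℝ} [IsProbabilityMeasure μ] [IsProbabilityMeasure ν]

theorem measure_Ici_le (h : StochasticLE μ ν) (a : ℝ) : μ (Ici a) ≤ ν (Ici a) := by
  set s : ℕ → Set ℝ := fun n => Ioi (a - 1 / (n + 1))
  have hs : Antitone s := fun m n hmn => Ioi_subset_Ioi (by gcongr)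
  have hIci : Ici a = ⋂ n, s n := by
    ext x
    simp only [mem_Ici, mem_iInter, s, mem_Ioi]
    refine ⟨fun hx n => by linarith [Nat.one_div_pos_of_nat (α := ℝ) (n := n)], fun hx => ?_⟩
    refine le_of_forall_pos_lt_add fun ε hε => ?_
    obtain ⟨n, hn⟩ := exists_nat_one_div_lt hε
    linarith [hx n]
  have hs_meas {κ : Measure ℝ} (n : ℕ) : NullMeasurableSet (s n) κ :=
    measurableSet_Ioi.nullMeasurableSet
  rw [hIci, hs.measure_iInter hs_meas ⟨0, measure_ne_top _ _⟩,
    hs.measure_iInter hs_meas ⟨0, measure_ne_top _ _⟩]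
  exact iInf_mono fun n => h _

theorem measure_le_of_isUpperSet (h : StochasticLE μ ν) {S : Set ℝ} (hS : IsUpperSet S) :
    μ S ≤ ν S := by
  by_cases hbdd : BddBelow S
  · rcases S.eq_empty_or_nonempty with rfl | hne
    · simp
    by_cases ha : sInf S ∈ S
    · have hS_eq : S = Ici (sInf S) :=
        Subset.antisymm (fun s hs => csInf_le hbdd hs) (hS.Ici_subset ha)
      rw [hS_eq]
      exact h.measure_Ici_le _
    · have hS_eq : S = Ioi (sInf S) := by
        refine subset_antisymm (fun s hs => (csInf_le hbdd hs).lt_of_ne ?_) fun y hy => ?_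
        · rintro rfl
          exact ha hs
        · obtain ⟨s, hs, hsy⟩ := (csInf_lt_iff hbdd hne).1 hy
          exact hS hsy.le hs
      rw [hS_eq]
      exact h _
  · have hS_eq : S = univ := eq_univ_of_forall fun x => by
      obtain ⟨s, hs, hsx⟩ := not_bddBelow_iff.1 hbdd x
      exact hS hsx.le hs
    simp [hS_eq]

theorem measure_le_of_isLowerSet (h : StochasticLE μ ν) {S : Set ℝ} (hS : IsLowerSet S) :
    ν S ≤ μ S := by
  have hS_meas : MeasurableSet Sᶜ := hS.ordConnected.measurableSet.compl
  rw [← compl_compl S, prob_compl_eq_one_sub hS_meas, prob_compl_eq_one_sub hS_meas]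
  exact tsub_le_tsub_left (h.measure_le_of_isUpperSet hS.compl) 1

theorem lintegral_le_of_monotone (h : StochasticLE μ ν) {f : ℝ → ℝ≥0∞} (hf : Monotone f)
    (hf_top : ∀ x, f x ≠ ∞) : ∫⁻ x, f x ∂μ ≤ ∫⁻ x, f x ∂ν := by
  rw [lintegral_eq_lintegral_measure_lt_toReal μ hf.measurable hf_top,
    lintegral_eq_lintegral_measure_lt_toReal ν hf.measurable hf_top]
  exact lintegral_mono fun t => h.measure_le_of_isUpperSet fun x y hxy hx =>
    hx.trans_le (ENNReal.toReal_mono (hf_top y) (hf hxy))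

theorem lintegral_le_of_antitone (h : StochasticLE μ ν) {f : ℝ → ℝ≥0∞} (hf : Antitone f)
    (hf_top : ∀ x, f x ≠ ∞) : ∫⁻ x, f x ∂ν ≤ ∫⁻ x, f x ∂μ := by
  rw [lintegral_eq_lintegral_measure_lt_toReal μ hf.measurable hf_top,
    lintegral_eq_lintegral_measure_lt_toReal ν hf.measurable hf_top]
  exact lintegral_mono fun t => h.measure_le_of_isLowerSet fun x y hyx hx =>
    hx.trans_le (ENNReal.toReal_mono (hf_top y) (hf hyx))

theorem lintegral_mul_measure_Ioi_le (h : StochasticLE μ ν) {g : ℝ → ℝ≥0∞} (hg : Antitone g)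
    {C : ℝ≥0∞} (hC : C ≠ ∞) (hgC : ∀ x, g x ≤ C) :
    ∫⁻ t, g t * μ (Ioi t) ∂ν ≤ ∫⁻ t, g t * ν (Ioi t) ∂μ := by
  set b : ℝ → ℝ≥0∞ := fun y => ∫⁻ x in Iio y, g x ∂ν
  have hb : Monotone b := fun y y' hyy' => lintegral_mono_set (Iio_subset_Iio hyy')
  have hb_top (y : ℝ) : b y ≠ ∞ := by
    refine ne_top_of_le_ne_top (ENNReal.mul_ne_top hC (measure_ne_top ν (Iio y))) ?_
    calc b y ≤ ∫⁻ _ in Iio y, C ∂ν := lintegral_mono hgC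
      _ = C * ν (Iio y) := setLIntegral_const _ _
  have hgν : Antitone fun t => g t * ν (Ioi t) := fun s t hst =>
    mul_le_mul' (hg hst) (measure_mono (Ioi_subset_Ioi hst))
  have hgν_top (t : ℝ) : g t * ν (Ioi t) ≠ ∞ :=
    ENNReal.mul_ne_top (ne_top_of_le_ne_top hC (hgC t)) (measure_ne_top _ _)
  calc ∫⁻ t, g t * μ (Ioi t) ∂ν = ∫⁻ y, b y ∂μ := lintegral_mul_measure_Ioi_eq ν μ hg.measurable
    _ ≤ ∫⁻ y, b y ∂ν := h.lintegral_le_of_monotone hb hb_top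
    _ = ∫⁻ t, g t * ν (Ioi t) ∂ν := (lintegral_mul_measure_Ioi_eq ν ν hg.measurable).symm
    _ ≤ ∫⁻ t, g t * ν (Ioi t) ∂μ := h.lintegral_le_of_antitone hgν hgν_top

end StochasticLE

theorem ProbabilityTheory.iIndepFun.measure_forall_lt_eq_lintegral {Ω ι : Type*}
    [MeasurableSpace Ω] {P : Measure Ω} [IsFiniteMeasure P] {V : ι → Ω → ℝ}
    (hmeas : ∀ i, Measurable (V i))
    (hindep : iIndepFun V P) {i : ι} {s : Finset ι} (hi : i ∉ s) :
    P {ω | ∀ j ∈ s, V i ω < V j ω} = ∫⁻ t, ∏ j ∈ s, P.map (V j) (Ioi t) ∂P.map (V i) := by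
  classical
  set W : Ω → s → ℝ := fun ω j => V j ω
  have hW : Measurable W := measurable_pi_lambda _ fun j => hmeas j
  have hiW : IndepFun (V i) W P :=
    (hindep.indepFun_finset {i} s (Finset.disjoint_singleton_left.2 hi) hmeas).comp
      (measurable_pi_apply (⟨i, Finset.mem_singleton_self i⟩ : ({i} : Finset ι)))
      measurable_id
  set S : Set (ℝ × (s → ℝ)) := {p | ∀ j, p.1 < p.2 j}
  have hS : MeasurableSet S := by
    simp only [S, ofPred_forall]
    exact MeasurableSet.iInter fun j =>
      measurableSet_lt measurable_fst ((measurable_pi_apply j).comp measurable_snd)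
  have hS_eq : {ω | ∀ j ∈ s, V i ω < V j ω} = (fun ω => (V i ω, W ω)) ⁻¹' S := by
    ext ω
    simp [S, W]
  rw [hS_eq, ← Measure.map_apply ((hmeas i).prodMk hW) hS,
    (indepFun_iff_map_prod_eq_prod_map_map (hmeas i).aemeasurable hW.aemeasurable).1 hiW,
    Measure.prod_apply hS]
  refine lintegral_congr fun t => ?_
  rw [Measure.map_apply hW (measurable_prodMk_left hS)]
  simp_rw [Measure.map_apply (hmeas _) measurableSet_Ioi]
  rw [← hindep.meas_biInter fun j _ => ⟨Ioi t, measurableSet_Ioi, rfl⟩]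
  congr with ω
  simp [S, W]

theorem ProbabilityTheory.iIndepFun.measure_lt_and_lt_and_lt_eq_lintegral {Ω ι : Type*}
    [MeasurableSpace Ω] [DecidableEq ι] {P : Measure Ω} [IsFiniteMeasure P] {V : ι → Ω → ℝ}
    (hmeas : ∀ i, Measurable (V i)) (hindep : iIndepFun V P) {i j k l : ι}
    (hi : i ∉ ({j, k, l} : Finset ι)) (hj : j ∉ ({k, l} : Finset ι)) (hkl : k ≠ l) :
    P {ω | V j ω > V i ω ∧ V k ω > V i ω ∧ V l ω > V i ω} =
      ∫⁻ t, P.map (V j) (Ioi t) * P.map (V k) (Ioi t) * P.map (V l) (Ioi t) ∂P.map (V i) := by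
  have hs : {ω | V j ω > V i ω ∧ V k ω > V i ω ∧ V l ω > V i ω} =
      {ω | ∀ m ∈ ({j, k, l} : Finset ι), V i ω < V m ω} := by
    ext ω
    simp
  rw [hs, hindep.measure_forall_lt_eq_lintegral hmeas hi]
  simp_rw [Finset.prod_insert hj, Finset.prod_pair hkl, mul_assoc]

theorem model_II_series_sp_st_general
    (Ω : Type*) [MeasurableSpace Ω] (P : Measure Ω) [IsProbabilityMeasure P]
    (V : Fin 5 → Ω → ℝ)
    (hmeas : ∀ i, Measurable (V i))
    (hnonneg : ∀ i, ∀ ω, 0 ≤ V i ω)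
    (hindep : iIndepFun V P)
    (SY1 SY2 : ℝ → ℝ) (γ1 γ2 : ℝ → ℝ)
    -- survival functions of Y₁, Y₂ and model functions γ₁, γ₂
    (hSY1_anti : Antitone SY1)
    -- Y₁*, Y₂* have survival functions F̄_{Y₁}(γ₁(·)), F̄_{Y₂}(γ₂(·))
    (hY1star : ∀ t ≥ 0, P {ω | V 3 ω > t} = ENNReal.ofReal (SY1 (γ1 t)))
    (hY2star : ∀ t ≥ 0, P {ω | V 4 ω > t} = ENNReal.ofReal (SY2 (γ2 t)))
    -- γ₁ ≤ γ₂, X₁ ≤_st X₂ and Y₂ ≤_st Y₁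
    (hγle : ∀ u ≥ 0, γ1 u ≤ γ2 u)
    (hstX : ∀ t : ℝ, P {ω | V 0 ω > t} ≤ P {ω | V 1 ω > t})
    (hstY : ∀ u, SY2 u ≤ SY1 u) :
    -- conclusion: P(V₂ˢ > V₁ˢ) ≤ P(V₁ˢ > V₂ˢ)
    P {ω | V 4 ω > V 1 ω ∧ V 0 ω > V 1 ω ∧ V 2 ω > V 1 ω} ≤
    P {ω | V 3 ω > V 0 ω ∧ V 1 ω > V 0 ω ∧ V 2 ω > V 0 ω} := by
  have hlaw (i : Fin 5) : IsProbabilityMeasure (P.map (V i)) :=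
    Measure.isProbabilityMeasure_map (hmeas i).aemeasurable
  set F : Fin 5 → ℝ → ℝ≥0∞ := fun i t => P.map (V i) (Ioi t)
  have hX : StochasticLE (P.map (V 0)) (P.map (V 1)) :=
    (stochasticLE_map_iff (hmeas 0) (hmeas 1)).2 hstX
  have hY : StochasticLE (P.map (V 4)) (P.map (V 3)) :=
    stochasticLE_map_of_nonneg (hmeas 4) (hmeas 3) (hnonneg 3) fun t ht => by
      rw [hY1star t ht, hY2star t ht]
      exact ENNReal.ofReal_le_ofReal ((hstY _).trans (hSY1_anti (hγle t ht)))
  have hg : Antitone fun t => F 3 t * F 2 t := fun s t hst =>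
    mul_le_mul' (measure_mono (Ioi_subset_Ioi hst)) (measure_mono (Ioi_subset_Ioi hst))
  have hg_le_one (t : ℝ) : F 3 t * F 2 t ≤ 1 := mul_le_one' prob_le_one prob_le_one
  rw [hindep.measure_lt_and_lt_and_lt_eq_lintegral hmeas (by decide) (by decide) (by decide),
    hindep.measure_lt_and_lt_and_lt_eq_lintegral hmeas (by decide) (by decide) (by decide)]
  calc ∫⁻ t, F 4 t * F 0 t * F 2 t ∂P.map (V 1)
      ≤ ∫⁻ t, F 3 t * F 2 t * F 0 t ∂P.map (V 1) := lintegral_mono fun t => by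
        rw [mul_right_comm]
        gcongr
        exact hY t
    _ ≤ ∫⁻ t, F 3 t * F 2 t * F 1 t ∂P.map (V 0) :=
        hX.lintegral_mul_measure_Ioi_le hg ENNReal.one_ne_top hg_le_one
    _ = ∫⁻ t, F 3 t * F 1 t * F 2 t ∂P.map (V 0) := by simp_rw [mul_right_comm]

theorem model_II_series_sp_st
    (Ω : Type*) [MeasurableSpace Ω] (P : Measure Ω) [IsProbabilityMeasure P]
    (V : Fin 5 → Ω → ℝ)
    (hmeas : ∀ i, Measurable (V i))
    (hnonneg : ∀ i, ∀ ω, 0 ≤ V i ω)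
    (hindep : iIndepFun V P)
    (SY1 SY2 : ℝ → ℝ) (γ1 γ2 : ℝ → ℝ)
    -- survival functions of Y₁, Y₂ and model functions γ₁, γ₂
    (hSY1_anti : Antitone SY1) (hSY2_anti : Antitone SY2)
    (hSY1_bd : ∀ u, 0 ≤ SY1 u ∧ SY1 u ≤ 1) (hSY2_bd : ∀ u, 0 ≤ SY2 u ∧ SY2 u ≤ 1)
    (hγ1_mono : MonotoneOn γ1 (Set.Ici 0)) (hγ2_mono : MonotoneOn γ2 (Set.Ici 0))
    (hγ1_bd : ∀ u ≥ 0, 0 ≤ γ1 u ∧ γ1 u ≤ u) (hγ2_bd : ∀ u ≥ 0, 0 ≤ γ2 u ∧ γ2 u ≤ u)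
    -- Y₁*, Y₂* have survival functions F̄_{Y₁}(γ₁(·)), F̄_{Y₂}(γ₂(·))
    (hY1star : ∀ t ≥ 0, P {ω | V 3 ω > t} = ENNReal.ofReal (SY1 (γ1 t)))
    (hY2star : ∀ t ≥ 0, P {ω | V 4 ω > t} = ENNReal.ofReal (SY2 (γ2 t)))
    -- γ₁ ≤ γ₂, X₁ ≤_st X₂ and Y₂ ≤_st Y₁
    (hγle : ∀ u ≥ 0, γ1 u ≤ γ2 u)
    (hstX : ∀ t : ℝ, P {ω | V 0 ω > t} ≤ P {ω | V 1 ω > t})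
    (hstY : ∀ u, SY2 u ≤ SY1 u) :
    -- conclusion: P(V₂ˢ > V₁ˢ) ≤ P(V₁ˢ > V₂ˢ)
    P {ω | V 4 ω > V 1 ω ∧ V 0 ω > V 1 ω ∧ V 2 ω > V 1 ω} ≤
    P {ω | V 3 ω > V 0 ω ∧ V 1 ω > V 0 ω ∧ V 2 ω > V 0 ω} :=
  model_II_series_sp_st_general Ω P V hmeas hnonneg hindep SY1 SY2 γ1 γ2 hSY1_anti hY1star hY2star
    hγle hstX hstY
end

section
/- If X₁ ≤_icv X₂, Y₂* ≤_icv Y₁*, and Y₂*, X₁, X₃, ..., Xₙ (or Y₁*, X₂, X₃, ..., Xₙ) have convex survival functions, then V₂^s ≤_sp V₁^s, i.e., P(V₁^s > V₂^s) ≥ P(V₂^s > V₁^s), where P(V₁^s > V₂^s) = P(Y₁* > X₁, X₂ > X₁, H₁ > X₁), P(V₂^s > V₁^s) = P(Y₂* > X₂, X₁ > X₂, H₁ > X₂), and H₁ = min{X₃,...,Xₙ}. -/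
/-! By independence, `P(V₁ˢ > V₂ˢ) = ∫ F̄_{Y₁*} F̄_{X₂} F̄_{H₁} dF_{X₁}` and
`P(V₂ˢ > V₁ˢ) = ∫ F̄_{Y₂*} F̄_{X₁} F̄_{H₁} dF_{X₂}`, and two kinds of moves turn the second
integral into the first.

* Changing the integrating law from `X₂` to `X₁` increases the integral, because a product of
  decreasing convex survival functions is decreasing and convex, so its negative is an
  increasing concave test function.
* Replacing a factor `F̄_A` by `F̄_B` with `A ≤_icv B` increases `∫ q F̄_A dμ` when `q` is
  decreasing and `μ` has a convex survival function: by Fubini this integral is `E[G(A)]` for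
  `G(y) = ∫_{t < y} q dμ`, which is increasing and concave on `(0, ∞)`.

These test functions are concave on `(0, ∞)` only, and may jump at `0` or have infinite slope
there; for nonnegative variables it suffices to compare them through their chord minorants,
which are concave on all of `ℝ` and differ from them only on `(0, ε)`. -/

open MeasureTheory ProbabilityTheory Set Filter Topology

lemma Antitone.mul_of_nonneg {f g : ℝ → ℝ} (hf : Antitone f) (hg : Antitone g)
    (hf0 : ∀ t, 0 ≤ f t) (hg0 : ∀ t, 0 ≤ g t) : Antitone fun t => f t * g t :=
  fun _ _ h => mul_le_mul (hf h) (hg h) (hg0 _) (hf0 _)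

lemma ConvexOn.mul_of_antitone {s : Set ℝ} {f g : ℝ → ℝ} (hf : ConvexOn ℝ s f)
    (hg : ConvexOn ℝ s g) (hf0 : ∀ t, 0 ≤ f t) (hg0 : ∀ t, 0 ≤ g t) (hfa : Antitone f)
    (hga : Antitone g) : ConvexOn ℝ s fun t => f t * g t :=
  hf.mul hg (fun x _ => hf0 x) (fun x _ => hg0 x)
    ((hfa.antitoneOn _).monovaryOn (hga.antitoneOn _))

section Concavity

variable {f g : ℝ → ℝ}

lemma ConcaveOn.secant_anti {s : Set ℝ} (hf : ConcaveOn ℝ s f) {a x y : ℝ} (ha : a ∈ s)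
    (hx : x ∈ s) (hy : y ∈ s) (hxa : x ≠ a) (hya : y ≠ a) (hxy : x ≤ y) :
    (f y - f a) / (y - a) ≤ (f x - f a) / (x - a) := by
  have h := hf.neg.secant_mono ha hx hy hxa hya hxy
  simp only [Pi.neg_apply, neg_sub_neg] at h
  have e : ∀ u, (f u - f a) / (u - a) = -((f a - f u) / (u - a)) := fun u => by ring
  rw [e, e]
  linarith

/-- At the endpoint, monotonicity makes `g a` no larger than the right limit of `g`,
which is all concavity asks there. -/
lemma concaveOn_Ici_of_concaveOn_Ioi {a : ℝ} (hg : MonotoneOn g (Ici a))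
    (hc : ConcaveOn ℝ (Ioi a) g) : ConcaveOn ℝ (Ici a) g := by
  refine concaveOn_of_slope_anti_adjacent (convex_Ici a) fun {x y z} hx hz hxy hyz => ?_
  rcases (mem_Ici.mp hx).lt_or_eq with hax | rfl
  · exact hc.slope_anti_adjacent hax (hax.trans (hxy.trans hyz)) hxy hyz
  set σ := (g z - g y) / (z - y)
  suffices σ * (y - a) ≤ g y - g a by rwa [le_div_iff₀ (sub_pos.mpr hxy)]
  have hlim : Tendsto (fun δ => σ * (y - δ)) (𝓝[>] a) (𝓝 (σ * (y - a))) :=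
    ((continuous_const.mul (continuous_const.sub continuous_id)).tendsto a).mono_left
      nhdsWithin_le_nhds
  refine le_of_tendsto hlim ?_
  filter_upwards [Ioo_mem_nhdsGT hxy] with δ hδ
  have hslope := hc.slope_anti_adjacent hδ.1 (hδ.1.trans (hδ.2.trans hyz)) hδ.2 hyz
  rw [le_div_iff₀ (sub_pos.mpr hδ.2)] at hslope
  linarith [hg self_mem_Ici (mem_Ici.mpr hδ.1.le) hδ.1.le]

lemma concaveOn_univ_of_Iic_of_Ici {a : ℝ} (hl : ConcaveOn ℝ (Iic a) f)
    (hr : ConcaveOn ℝ (Ici a) f)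
    (hlr : ∀ x z, x < a → a < z → (f z - f a) / (z - a) ≤ (f a - f x) / (a - x)) :
    ConcaveOn ℝ univ f := by
  refine concaveOn_of_slope_anti_adjacent convex_univ fun {x y z} _ _ hxy hyz => ?_
  rcases le_or_gt z a with hza | haz
  · exact hl.slope_anti_adjacent (hxy.trans hyz |>.le.trans hza) hza hxy hyz
  rcases le_or_gt a x with hax | hxa
  · exact hr.slope_anti_adjacent hax (hax.trans (hxy.trans hyz).le) hxy hyz
  rcases lt_trichotomy y a with hya | rfl | hay
  · have h₁ := hl.slope_anti_adjacent hxa.le self_mem_Iic hxy hya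
    have h₂ := hlr y z hya haz
    rw [div_le_iff₀ (sub_pos.mpr haz)] at h₂
    rw [div_le_iff₀ (sub_pos.mpr hyz)]
    have : f a - f y = (f a - f y) / (a - y) * (a - y) := by
      field_simp [(sub_pos.mpr hya).ne']
    nlinarith
  · exact hlr x z hxa haz
  · have h₁ := hlr x y hxa hay
    have h₂ := hr.slope_anti_adjacent self_mem_Ici (hay.trans hyz).le hay hyz
    rw [le_div_iff₀ (sub_pos.mpr hxa)] at h₁
    rw [le_div_iff₀ (sub_pos.mpr hxy)]
    have : f y - f a = (f y - f a) / (y - a) * (y - a) := by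
      field_simp [(sub_pos.mpr hay).ne']
    nlinarith

noncomputable def chordMinorant (g : ℝ → ℝ) (ε x : ℝ) : ℝ :=
  if x ≤ ε then g 0 + (g ε - g 0) / ε * x else g x

section ChordMinorant

variable {ε : ℝ}

lemma chordMinorant_of_le {x : ℝ} (hx : x ≤ ε) :
    chordMinorant g ε x = g 0 + (g ε - g 0) / ε * x := if_pos hx

lemma chordMinorant_zero (hε : 0 < ε) : chordMinorant g ε 0 = g 0 := by
  simp [chordMinorant_of_le hε.le]

lemma chordMinorant_of_ge (hε : 0 < ε) {x : ℝ} (hx : ε ≤ x) : chordMinorant g ε x = g x := by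
  rcases hx.eq_or_lt with rfl | hx
  · rw [chordMinorant_of_le le_rfl]
    field_simp
    ring
  · exact if_neg (not_le.mpr hx)

lemma monotone_chordMinorant (hε : 0 < ε) (hgm : Monotone g) :
    Monotone (chordMinorant g ε) := by
  have hs : 0 ≤ (g ε - g 0) / ε := div_nonneg (sub_nonneg.mpr (hgm hε.le)) hε.le
  have hl : MonotoneOn (chordMinorant g ε) (Iic ε) := fun x hx y hy hxy => by
    rw [chordMinorant_of_le hx, chordMinorant_of_le hy]
    gcongr
  have hr : MonotoneOn (chordMinorant g ε) (Ici ε) := fun x hx y hy hxy => by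
    rw [chordMinorant_of_ge hε hx, chordMinorant_of_ge hε hy]
    exact hgm hxy
  simpa using hl.union_right hr isGreatest_Iic isLeast_Ici

lemma concaveOn_chordMinorant (hε : 0 < ε) (hgc : ConcaveOn ℝ (Ici 0) g) :
    ConcaveOn ℝ univ (chordMinorant g ε) := by
  refine concaveOn_univ_of_Iic_of_Ici (a := ε) ?_ ?_ fun x z hx hz => ?_
  · refine (((LinearMap.mulLeft ℝ ((g ε - g 0) / ε)).concaveOn (convex_Iic ε)).add_const
      (g 0)).congr fun x hx => ?_
    simp [chordMinorant_of_le (mem_Iic.mp hx), add_comm]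
  · exact (hgc.subset (Ici_subset_Ici.mpr hε.le) (convex_Ici ε)).congr fun x hx =>
      (chordMinorant_of_ge hε hx).symm
  · have hsec := hgc.secant_anti self_mem_Ici hε.le (hε.trans hz).le hε.ne' (hε.trans hz).ne'
      hz.le
    rw [chordMinorant_of_ge hε hz.le, chordMinorant_of_ge hε le_rfl, chordMinorant_of_le hx.le]
    set s := (g ε - g 0) / ε
    have hsε : s * ε = g ε - g 0 := div_mul_cancel₀ _ hε.ne'
    have hchord : (g ε - (g 0 + s * x)) / (ε - x) = s := by
      rw [div_eq_iff (sub_pos.mpr hx).ne']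
      linarith
    simp only [sub_zero] at hsec
    rw [hchord, div_le_iff₀ (sub_pos.mpr hz)]
    rw [div_le_iff₀ (hε.trans hz)] at hsec
    linarith

lemma chordMinorant_le (hε : 0 < ε) (hgc : ConcaveOn ℝ (Ici 0) g) {x : ℝ} (hx : 0 ≤ x) :
    chordMinorant g ε x ≤ g x := by
  rcases le_or_gt x ε with hxε | hxε
  · rw [chordMinorant_of_le hxε]
    rcases hx.eq_or_lt with rfl | hx
    · simp
    have hsec := hgc.secant_anti self_mem_Ici hx.le hε.le hx.ne' hε.ne' hxε
    simp only [sub_zero] at hsec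
    rw [div_le_div_iff₀ hε hx] at hsec
    have : (g ε - g 0) * x / ε ≤ g x - g 0 := by rwa [div_le_iff₀ hε]
    rw [div_mul_eq_mul_div]
    linarith
  · exact (chordMinorant_of_ge hε hxε.le).le

lemma abs_chordMinorant_le {C : ℝ} (hε : 0 < ε) (hgc : ConcaveOn ℝ (Ici 0) g)
    (hgm : Monotone g) (hgC : ∀ x, 0 ≤ x → |g x| ≤ C) {x : ℝ} (hx : 0 ≤ x) :
    |chordMinorant g ε x| ≤ C := by
  have h0 := (abs_le.mp (hgC 0 le_rfl)).1
  have hx' := (abs_le.mp (hgC x hx)).2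
  rw [abs_le]
  constructor
  · linarith [chordMinorant_zero hε (g := g) ▸ monotone_chordMinorant hε hgm hx]
  · linarith [chordMinorant_le hε hgc hx]

lemma le_chordMinorant_add_indicator {C : ℝ} (hε : 0 < ε) (hgc : ConcaveOn ℝ (Ici 0) g)
    (hgm : Monotone g) (hgC : ∀ x, 0 ≤ x → |g x| ≤ C) {x : ℝ} (hx : 0 ≤ x) :
    g x ≤ chordMinorant g ε x + (Ioo 0 ε).indicator (fun _ => 2 * C) x := by
  by_cases hxε : x ∈ Ioo 0 ε
  · rw [indicator_of_mem hxε]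
    linarith [(abs_le.mp (hgC x hx)).2, (abs_le.mp (abs_chordMinorant_le hε hgc hgm hgC hx)).1]
  · rw [indicator_of_notMem hxε, add_zero]
    rcases hx.eq_or_lt with rfl | hx
    · exact (chordMinorant_zero hε).ge
    · exact (chordMinorant_of_ge hε (not_lt.mp fun h => hxε ⟨hx, h⟩)).ge

end ChordMinorant

end Concavity

namespace ProbabilityTheory

noncomputable def survival (μ : Measure ℝ) (t : ℝ) : ℝ := μ.real (Ioi t)

section Survival

variable {μ : Measure ℝ}

lemma survival_nonneg (t : ℝ) : 0 ≤ survival μ t := measureReal_nonneg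

lemma survival_le_one [IsProbabilityMeasure μ] (t : ℝ) : survival μ t ≤ 1 := measureReal_le_one

variable [IsFiniteMeasure μ]

lemma survival_antitone : Antitone (survival μ) :=
  fun _ _ h => measureReal_mono (Ioi_subset_Ioi h)

lemma survival_sub_survival {x y : ℝ} (hxy : x ≤ y) :
    survival μ x - survival μ y = μ.real (Ioc x y) := by
  rw [survival, survival, ← measureReal_sdiff (Ioi_subset_Ioi hxy) measurableSet_Ioi,
    Ioi_sdiff_Ioi]

lemma measure_singleton_eq_zero_of_continuousAt_survival {y : ℝ}
    (h : ContinuousAt (survival μ) y) : μ {y} = 0 := by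
  have hlim : Tendsto (fun x => survival μ x - survival μ y) (𝓝[<] y) (𝓝 0) := by
    simpa using (h.tendsto.sub_const (survival μ y)).mono_left nhdsWithin_le_nhds
  have hle : μ.real {y} ≤ 0 := by
    refine ge_of_tendsto hlim ?_
    filter_upwards [self_mem_nhdsWithin] with x (hx : x < y)
    rw [survival_sub_survival hx.le]
    exact measureReal_mono (singleton_subset_iff.mpr ⟨hx, le_rfl⟩)
  exact (measureReal_eq_zero_iff (measure_ne_top μ _)).mp (le_antisymm hle measureReal_nonneg)

lemma measure_singleton_eq_zero_of_convexOn_survival (h : ConvexOn ℝ (Ioi 0) (survival μ))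
    {y : ℝ} (hy : 0 < y) : μ {y} = 0 :=
  measure_singleton_eq_zero_of_continuousAt_survival
    ((h.continuousOn isOpen_Ioi).continuousAt (Ioi_mem_nhds hy))

lemma measureReal_Ico_eq_survival_sub {x y : ℝ} (hxy : x ≤ y) (hx : μ {x} = 0)
    (hy : μ {y} = 0) : μ.real (Ico x y) = survival μ x - survival μ y := by
  rw [survival_sub_survival hxy, measureReal_congr (Ico_ae_eq_Ioc' hx hy)]

end Survival

section LowerIntegral

variable {μ : Measure ℝ} {q : ℝ → ℝ}

lemma monotone_setIntegral_Iio (hq : Integrable q μ) (hq0 : 0 ≤ q) :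
    Monotone (fun y => ∫ t in Iio y, q t ∂μ) := fun _ _ h =>
  setIntegral_mono_set hq.integrableOn (ae_of_all _ fun t => hq0 t)
    (Iio_subset_Iio h).eventuallyLE

lemma setIntegral_Iio_sub_setIntegral_Iio (hq : Integrable q μ) {y z : ℝ} (hyz : y ≤ z) :
    ∫ t in Iio z, q t ∂μ - ∫ t in Iio y, q t ∂μ = ∫ t in Ico y z, q t ∂μ := by
  rw [← Iio_union_Ico_eq_Iio hyz, setIntegral_union
    ((Iio_disjoint_Ici le_rfl).mono_right Ico_subset_Ici_self) measurableSet_Ico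
    hq.integrableOn hq.integrableOn]
  ring

lemma abs_setIntegral_Iio_le (hq : Integrable q μ) (hq0 : 0 ≤ q) (y : ℝ) :
    |∫ t in Iio y, q t ∂μ| ≤ ∫ t, q t ∂μ := by
  rw [abs_of_nonneg (setIntegral_nonneg measurableSet_Iio fun t _ => hq0 t)]
  exact setIntegral_le_integral hq (ae_of_all _ hq0)

/-- On `[y, z]` the slope is at most `q y` times the slope of `-survival μ`, on `[x, y]` at
least that, and convexity of `survival μ` orders the two. -/
lemma concaveOn_setIntegral_Iio [IsFiniteMeasure μ] (hμ : ConvexOn ℝ (Ioi 0) (survival μ))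
    (hq : Integrable q μ) (hq0 : 0 ≤ q) (hqa : Antitone q) :
    ConcaveOn ℝ (Ioi 0) (fun y => ∫ t in Iio y, q t ∂μ) := by
  refine concaveOn_of_slope_anti_adjacent (convex_Ioi 0) fun {x y z} hx hz hxy hyz => ?_
  have hy : (0 : ℝ) < y := lt_trans hx hxy
  have hatom : ∀ w : ℝ, 0 < w → μ {w} = 0 := fun w hw =>
    measure_singleton_eq_zero_of_convexOn_survival hμ hw
  have upper : ∫ t in Ico y z, q t ∂μ ≤ μ.real (Ico y z) * q y := by
    rw [← smul_eq_mul, ← setIntegral_const]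
    exact setIntegral_mono_on hq.integrableOn (integrableOn_const (measure_ne_top μ _))
      measurableSet_Ico fun t ht => hqa ht.1
  have lower : μ.real (Ico x y) * q y ≤ ∫ t in Ico x y, q t ∂μ :=
    setIntegral_ge_of_const_le measurableSet_Ico (measure_ne_top μ _)
      (fun t ht => hqa ht.2.le) hq.integrableOn
  have hsf := hμ.slope_mono_adjacent hx hz hxy hyz
  rw [setIntegral_Iio_sub_setIntegral_Iio hq hyz.le,
    setIntegral_Iio_sub_setIntegral_Iio hq hxy.le]
  rw [measureReal_Ico_eq_survival_sub hyz.le (hatom y hy) (hatom z (hy.trans hyz))] at upper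
  rw [measureReal_Ico_eq_survival_sub hxy.le (hatom x hx) (hatom y hy)] at lower
  calc (∫ t in Ico y z, q t ∂μ) / (z - y)
      ≤ (survival μ y - survival μ z) * q y / (z - y) := by gcongr
    _ = -((survival μ z - survival μ y) / (z - y)) * q y := by ring
    _ ≤ -((survival μ y - survival μ x) / (y - x)) * q y := by
        gcongr
        · exact hq0 y
    _ = (survival μ x - survival μ y) * q y / (y - x) := by field_simp; ring
    _ ≤ (∫ t in Ico x y, q t ∂μ) / (y - x) := by gcongr

end LowerIntegral

lemma integral_mul_survival_eq {μ ν : Measure ℝ} [IsFiniteMeasure μ] [IsFiniteMeasure ν]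
    {q : ℝ → ℝ} (hq : Integrable q μ) :
    ∫ t, q t * survival ν t ∂μ = ∫ y, ∫ t in Iio y, q t ∂μ ∂ν := by
  have hint : Integrable (Function.uncurry fun t y => (Ioi t).indicator (fun _ => q t) y)
      (μ.prod ν) := by
    have h : Function.uncurry (fun t y => (Ioi t).indicator (fun _ => q t) y) =
        {p : ℝ × ℝ | p.1 < p.2}.indicator (fun p => q p.1 * 1) := by
      funext ⟨t, y⟩
      simp [indicator]
    rw [h]
    exact (hq.mul_prod (integrable_const 1)).indicator
      (measurableSet_lt measurable_fst measurable_snd)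
  have hswap := integral_integral_swap hint
  simp only [integral_indicator_const _ measurableSet_Ioi, smul_eq_mul] at hswap
  simp only [survival, mul_comm (q _), hswap]
  congr 1 with y
  rw [← integral_indicator measurableSet_Iio]
  congr 1 with t

def IcvLE (μ ν : Measure ℝ) : Prop :=
  ∀ ξ : ℝ → ℝ, Monotone ξ → ConcaveOn ℝ univ ξ → Integrable ξ μ → Integrable ξ ν →
    ∫ x, ξ x ∂μ ≤ ∫ x, ξ x ∂ν

lemma icvLE_map {Ω : Type*} [MeasurableSpace Ω] {P : Measure Ω} {A B : Ω → ℝ}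
    (hA : AEMeasurable A P) (hB : AEMeasurable B P)
    (h : ∀ ξ : ℝ → ℝ, Monotone ξ → ConcaveOn ℝ univ ξ →
      Integrable (fun ω => ξ (A ω)) P → Integrable (fun ω => ξ (B ω)) P →
      ∫ ω, ξ (A ω) ∂P ≤ ∫ ω, ξ (B ω) ∂P) :
    IcvLE (P.map A) (P.map B) := fun ξ hξ hc hiA hiB => by
  rw [integral_map hA hξ.measurable.aestronglyMeasurable,
    integral_map hB hξ.measurable.aestronglyMeasurable]
  exact h ξ hξ hc (hiA.comp_aemeasurable hA) (hiB.comp_aemeasurable hB)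

lemma tendsto_measureReal_Ioo_nhdsGT (μ : Measure ℝ) [IsFiniteMeasure μ] (a : ℝ) :
    Tendsto (fun ε => μ.real (Ioo a ε)) (𝓝[>] a) (𝓝 0) := by
  have h := tendsto_measure_biInter_gt (μ := μ) (s := fun ε => Ioo a ε) (a := a)
    (fun _ _ => nullMeasurableSet_Ioo) (fun _ _ _ hij => Ioo_subset_Ioo_right hij)
    ⟨a + 1, by linarith, measure_ne_top μ _⟩
  have hempty : (⋂ r > a, Ioo a r) = ∅ :=
    eq_empty_of_forall_notMem fun x hx => by
      simp only [mem_iInter] at hx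
      exact lt_irrefl x (hx x (hx (a + 1) (by linarith)).1).2
  rw [hempty, measure_empty] at h
  exact (ENNReal.tendsto_toReal ENNReal.zero_ne_top).comp h

lemma integrable_of_abs_le_of_ae_nonneg {μ : Measure ℝ} [IsFiniteMeasure μ] {g : ℝ → ℝ} {C : ℝ}
    (hμ : ∀ᵐ x ∂μ, 0 ≤ x) (hg : Measurable g) (hC : ∀ x, 0 ≤ x → |g x| ≤ C) : Integrable g μ :=
  Integrable.of_bound hg.aestronglyMeasurable C (hμ.mono fun x hx => hC x hx)

section Approximation

variable {μ ν : Measure ℝ} [IsFiniteMeasure μ] [IsFiniteMeasure ν] {g : ℝ → ℝ} {C : ℝ}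

lemma IcvLE.integral_le_add_measureReal_Ioo (h : IcvLE μ ν) (hμ : ∀ᵐ x ∂μ, 0 ≤ x)
    (hν : ∀ᵐ x ∂ν, 0 ≤ x) (hgm : Monotone g) (hgc : ConcaveOn ℝ (Ici 0) g)
    (hgC : ∀ x, 0 ≤ x → |g x| ≤ C) {ε : ℝ} (hε : 0 < ε) :
    ∫ x, g x ∂μ ≤ ∫ x, g x ∂ν + 2 * C * μ.real (Ioo 0 ε) := by
  set ξ := chordMinorant g ε
  have hint : ∀ ρ : Measure ℝ, [IsFiniteMeasure ρ] → (∀ᵐ x ∂ρ, 0 ≤ x) → Integrable g ρ :=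
    fun ρ _ hρ => integrable_of_abs_le_of_ae_nonneg hρ hgm.measurable hgC
  have hξint : ∀ ρ : Measure ℝ, [IsFiniteMeasure ρ] → (∀ᵐ x ∂ρ, 0 ≤ x) → Integrable ξ ρ :=
    fun ρ _ hρ => integrable_of_abs_le_of_ae_nonneg hρ (monotone_chordMinorant hε hgm).measurable
      fun x hx => abs_chordMinorant_le hε hgc hgm hgC hx
  have hind : Integrable ((Ioo 0 ε).indicator fun _ => 2 * C) μ :=
    (integrable_const _).indicator measurableSet_Ioo
  calc ∫ x, g x ∂μ ≤ ∫ x, ξ x + (Ioo 0 ε).indicator (fun _ => 2 * C) x ∂μ :=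
        integral_mono_ae (hint μ hμ) ((hξint μ hμ).add hind)
          (hμ.mono fun x hx => le_chordMinorant_add_indicator hε hgc hgm hgC hx)
    _ = ∫ x, ξ x ∂μ + 2 * C * μ.real (Ioo 0 ε) := by
        rw [integral_add (hξint μ hμ) hind, integral_indicator_const _ measurableSet_Ioo,
          smul_eq_mul, mul_comm]
    _ ≤ ∫ x, ξ x ∂ν + 2 * C * μ.real (Ioo 0 ε) :=
        add_le_add (h ξ (monotone_chordMinorant hε hgm) (concaveOn_chordMinorant hε hgc)
          (hξint μ hμ) (hξint ν hν)) le_rfl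
    _ ≤ ∫ x, g x ∂ν + 2 * C * μ.real (Ioo 0 ε) :=
        add_le_add (integral_mono_ae (hξint ν hν) (hint ν hν)
          (hν.mono fun x hx => chordMinorant_le hε hgc hx)) le_rfl

theorem IcvLE.integral_le_of_concaveOn_Ioi (h : IcvLE μ ν) (hμ : ∀ᵐ x ∂μ, 0 ≤ x)
    (hν : ∀ᵐ x ∂ν, 0 ≤ x) (hgm : Monotone g) (hgc : ConcaveOn ℝ (Ioi 0) g)
    (hgC : ∀ x, 0 ≤ x → |g x| ≤ C) : ∫ x, g x ∂μ ≤ ∫ x, g x ∂ν := by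
  have hlim : Tendsto (fun ε => ∫ x, g x ∂ν + 2 * C * μ.real (Ioo 0 ε)) (𝓝[>] 0)
      (𝓝 (∫ x, g x ∂ν)) := by
    simpa using tendsto_const_nhds.add ((tendsto_measureReal_Ioo_nhdsGT μ 0).const_mul (2 * C))
  refine ge_of_tendsto hlim (eventually_nhdsWithin_of_forall fun ε hε => ?_)
  exact h.integral_le_add_measureReal_Ioo hμ hν hgm
    (concaveOn_Ici_of_concaveOn_Ioi (hgm.monotoneOn _) hgc) hgC hε

theorem IcvLE.integral_le_of_convexOn_Ioi (h : IcvLE μ ν) (hμ : ∀ᵐ x ∂μ, 0 ≤ x)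
    (hν : ∀ᵐ x ∂ν, 0 ≤ x) {ψ : ℝ → ℝ} (hψ : Antitone ψ) (hψc : ConvexOn ℝ (Ioi 0) ψ)
    (hψC : ∀ x, 0 ≤ x → |ψ x| ≤ C) : ∫ x, ψ x ∂ν ≤ ∫ x, ψ x ∂μ := by
  have := h.integral_le_of_concaveOn_Ioi hμ hν hψ.neg hψc.neg fun x hx => by
    simpa using hψC x hx
  simpa [integral_neg] using this

theorem IcvLE.integral_mul_survival_le (h : IcvLE μ ν) (hμ : ∀ᵐ x ∂μ, 0 ≤ x)
    (hν : ∀ᵐ x ∂ν, 0 ≤ x) {ρ : Measure ℝ} [IsFiniteMeasure ρ]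
    (hρ : ConvexOn ℝ (Ioi 0) (survival ρ)) {q : ℝ → ℝ} (hq : Integrable q ρ) (hq0 : 0 ≤ q)
    (hqa : Antitone q) : ∫ t, q t * survival μ t ∂ρ ≤ ∫ t, q t * survival ν t ∂ρ := by
  rw [integral_mul_survival_eq hq, integral_mul_survival_eq hq]
  exact h.integral_le_of_concaveOn_Ioi hμ hν (monotone_setIntegral_Iio hq hq0)
    (concaveOn_setIntegral_Iio hρ hq hq0 hqa) fun y _ => abs_setIntegral_Iio_le hq hq0 y

end Approximation

section SurvivalProducts

variable {ρ₁ ρ₂ ρ₃ : Measure ℝ} [IsProbabilityMeasure ρ₁] [IsProbabilityMeasure ρ₂]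
  [IsProbabilityMeasure ρ₃]

lemma antitone_survival_mul : Antitone fun t => survival ρ₁ t * survival ρ₂ t :=
  survival_antitone.mul_of_nonneg survival_antitone survival_nonneg survival_nonneg

lemma survival_mul_mem_Icc (t : ℝ) : survival ρ₁ t * survival ρ₂ t ∈ Icc 0 1 :=
  ⟨mul_nonneg (survival_nonneg t) (survival_nonneg t),
    mul_le_one₀ (survival_le_one t) (survival_nonneg t) (survival_le_one t)⟩

lemma integrable_survival_mul {μ : Measure ℝ} [IsFiniteMeasure μ] :
    Integrable (fun t => survival ρ₁ t * survival ρ₂ t) μ :=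
  Integrable.of_bound antitone_survival_mul.measurable.aestronglyMeasurable 1
    (ae_of_all _ fun t => by
      rw [Real.norm_eq_abs, abs_of_nonneg (survival_mul_mem_Icc t).1]
      exact (survival_mul_mem_Icc t).2)

lemma integral_survival_mul_mul_mono_of_icvLE {μ₀ μ₁ ν₃ ν₄ : Measure ℝ} [IsProbabilityMeasure μ₀]
    [IsProbabilityMeasure μ₁] [IsProbabilityMeasure ν₃] [IsProbabilityMeasure ν₄]
    (hμ : IcvLE μ₀ μ₁) (hν : IcvLE ν₄ ν₃) (hμ₀ : ∀ᵐ x ∂μ₀, 0 ≤ x) (hμ₁ : ∀ᵐ x ∂μ₁, 0 ≤ x)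
    (hν₃ : ∀ᵐ x ∂ν₃, 0 ≤ x) (hν₄ : ∀ᵐ x ∂ν₄, 0 ≤ x) (η : Measure ℝ) [IsProbabilityMeasure η]
    {ρ : Measure ℝ} [IsFiniteMeasure ρ] (hρ : ConvexOn ℝ (Ioi 0) (survival ρ)) :
    ∫ t, survival ν₄ t * survival μ₀ t * survival η t ∂ρ ≤
      ∫ t, survival ν₃ t * survival μ₁ t * survival η t ∂ρ :=
  calc ∫ t, survival ν₄ t * survival μ₀ t * survival η t ∂ρ
      = ∫ t, survival μ₀ t * survival η t * survival ν₄ t ∂ρ := by congr 1 with t; ring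
    _ ≤ ∫ t, survival μ₀ t * survival η t * survival ν₃ t ∂ρ :=
        hν.integral_mul_survival_le hν₄ hν₃ hρ integrable_survival_mul
          (fun t => (survival_mul_mem_Icc t).1) antitone_survival_mul
    _ = ∫ t, survival ν₃ t * survival η t * survival μ₀ t ∂ρ := by congr 1 with t; ring
    _ ≤ ∫ t, survival ν₃ t * survival η t * survival μ₁ t ∂ρ :=
        hμ.integral_mul_survival_le hμ₀ hμ₁ hρ integrable_survival_mul
          (fun t => (survival_mul_mem_Icc t).1) antitone_survival_mul
    _ = ∫ t, survival ν₃ t * survival μ₁ t * survival η t ∂ρ := by congr 1 with t; ring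

lemma IcvLE.integral_survival_mul_mul_le {μ ν : Measure ℝ} [IsFiniteMeasure μ]
    [IsFiniteMeasure ν] (h : IcvLE μ ν) (hμ : ∀ᵐ x ∂μ, 0 ≤ x) (hν : ∀ᵐ x ∂ν, 0 ≤ x)
    (h₁ : ConvexOn ℝ (Ioi 0) (survival ρ₁)) (h₂ : ConvexOn ℝ (Ioi 0) (survival ρ₂))
    (h₃ : ConvexOn ℝ (Ioi 0) (survival ρ₃)) :
    ∫ t, survival ρ₁ t * survival ρ₂ t * survival ρ₃ t ∂ν ≤
      ∫ t, survival ρ₁ t * survival ρ₂ t * survival ρ₃ t ∂μ := by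
  have h₁₂ := h₁.mul_of_antitone h₂ survival_nonneg survival_nonneg survival_antitone
    survival_antitone
  refine h.integral_le_of_convexOn_Ioi hμ hν
    (antitone_survival_mul.mul_of_nonneg survival_antitone
      (fun t => (survival_mul_mem_Icc t).1) survival_nonneg)
    (h₁₂.mul_of_antitone h₃ (fun t => (survival_mul_mem_Icc t).1) survival_nonneg
      antitone_survival_mul survival_antitone) (C := 1) fun t _ => ?_
  have h₁₂t := survival_mul_mem_Icc (ρ₁ := ρ₁) (ρ₂ := ρ₂) t
  rw [abs_of_nonneg (mul_nonneg h₁₂t.1 (survival_nonneg t))]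
  exact mul_le_one₀ h₁₂t.2 (survival_nonneg t) (survival_le_one t)

end SurvivalProducts

lemma measureReal_forall_lt_eq_integral_prod_survival {Ω ι : Type*} [MeasurableSpace Ω]
    {P : Measure Ω} [IsProbabilityMeasure P] {V : ι → Ω → ℝ} (hV : ∀ i, Measurable (V i))
    (hindep : iIndepFun V P) {T : Finset ι} {d : ι} (hd : d ∉ T) :
    P.real {ω | ∀ i ∈ T, V d ω < V i ω} =
      ∫ t, ∏ i ∈ T, survival (P.map (V i)) t ∂(P.map (V d)) := by
  set W : Ω → T → ℝ := fun ω i => V i ω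
  have hW : Measurable W := measurable_pi_lambda _ fun i => hV i
  have hdW : IndepFun (V d) W P :=
    (hindep.indepFun_finset {d} T (Finset.disjoint_singleton_left.mpr hd) hV).comp
      (measurable_pi_apply (⟨d, Finset.mem_singleton_self d⟩ : ({d} : Finset ι)))
      measurable_id
  set U : Set (ℝ × (T → ℝ)) := {p | ∀ i, p.1 < p.2 i}
  have hU : MeasurableSet U := by
    simp only [U, ofPred_forall]
    exact MeasurableSet.iInter fun i =>
      measurableSet_lt measurable_fst ((measurable_pi_apply i).comp measurable_snd)
  have hsection : ∀ t, (P.map W) (Prod.mk t ⁻¹' U) = ∏ i ∈ T, (P.map (V i)) (Ioi t) := by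
    intro t
    have hpre : W ⁻¹' (Prod.mk t ⁻¹' U) = ⋂ i ∈ T, V i ⁻¹' Ioi t := by
      ext ω
      simp [U, W]
    rw [Measure.map_apply hW (measurable_prodMk_left hU), hpre,
      hindep.measure_inter_preimage_eq_mul T fun _ _ => measurableSet_Ioi]
    simp_rw [Measure.map_apply (hV _) measurableSet_Ioi]
  have hevent : {ω | ∀ i ∈ T, V d ω < V i ω} = (fun ω => (V d ω, W ω)) ⁻¹' U := by
    ext ω
    simp [U, W]
  rw [measureReal_def, hevent, ← Measure.map_apply ((hV d).prodMk hW) hU,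
    (indepFun_iff_map_prod_eq_prod_map_map (hV d).aemeasurable hW.aemeasurable).mp hdW,
    Measure.prod_apply hU]
  simp_rw [hsection, survival, measureReal_def, ← ENNReal.toReal_prod]
  refine (integral_toReal ?_ (ae_of_all _ fun t => ?_)).symm
  · refine (Finset.measurable_prod _ fun i _ => Antitone.measurable ?_).aemeasurable
    exact fun _ _ h => measure_mono (Ioi_subset_Ioi h)
  · exact ENNReal.prod_lt_top fun i _ => measure_lt_top _ _

theorem integral_survival_mul_mul_le_of_icvLE {μ₀ μ₁ ν₃ ν₄ η : Measure ℝ}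
    [IsProbabilityMeasure μ₀] [IsProbabilityMeasure μ₁] [IsProbabilityMeasure ν₃]
    [IsProbabilityMeasure ν₄] [IsProbabilityMeasure η]
    (hμ : IcvLE μ₀ μ₁) (hν : IcvLE ν₄ ν₃) (hμ₀ : ∀ᵐ x ∂μ₀, 0 ≤ x) (hμ₁ : ∀ᵐ x ∂μ₁, 0 ≤ x)
    (hν₃ : ∀ᵐ x ∂ν₃, 0 ≤ x) (hν₄ : ∀ᵐ x ∂ν₄, 0 ≤ x)
    (hconv : (ConvexOn ℝ (Ioi 0) (survival ν₄) ∧ ConvexOn ℝ (Ioi 0) (survival μ₀) ∧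
        ConvexOn ℝ (Ioi 0) (survival η)) ∨
      (ConvexOn ℝ (Ioi 0) (survival ν₃) ∧ ConvexOn ℝ (Ioi 0) (survival μ₁) ∧
        ConvexOn ℝ (Ioi 0) (survival η))) :
    ∫ t, survival ν₄ t * survival μ₀ t * survival η t ∂μ₁ ≤
      ∫ t, survival ν₃ t * survival μ₁ t * survival η t ∂μ₀ := by
  rcases hconv with ⟨h₄, h₀, hη⟩ | ⟨h₃, h₁, hη⟩
  · exact (hμ.integral_survival_mul_mul_le hμ₀ hμ₁ h₄ h₀ hη).trans
      (integral_survival_mul_mul_mono_of_icvLE hμ hν hμ₀ hμ₁ hν₃ hν₄ η h₀)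
  · exact (integral_survival_mul_mul_mono_of_icvLE hμ hν hμ₀ hμ₁ hν₃ hν₄ η h₁).trans
      (hμ.integral_survival_mul_mul_le hμ₀ hμ₁ h₃ h₁ hη)

end ProbabilityTheory

/- `V 0 = X₁`, `V 1 = X₂`, `V 2 = H₁`, `V 3 = Y₁*`, `V 4 = Y₂*`. -/
theorem model_II_series_sp_icv
    (Ω : Type*) [MeasurableSpace Ω] (P : Measure Ω) [IsProbabilityMeasure P]
    (V : Fin 5 → Ω → ℝ)
    (hmeas : ∀ i, Measurable (V i))
    (hnonneg : ∀ i, ∀ ω, 0 ≤ V i ω)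
    (hindep : iIndepFun V P)
    (surv : Fin 5 → ℝ → ℝ)
    (hsurv : ∀ i t, surv i t = (P {ω | V i ω > t}).toReal)
    -- X₁ ≤_icv X₂
    (hicvX : ∀ ξ : ℝ → ℝ, Monotone ξ → ConcaveOn ℝ Set.univ ξ →
        Integrable (fun ω => ξ (V 0 ω)) P → Integrable (fun ω => ξ (V 1 ω)) P →
        ∫ ω, ξ (V 0 ω) ∂P ≤ ∫ ω, ξ (V 1 ω) ∂P)
    -- Y₂* ≤_icv Y₁*
    (hicvY : ∀ ξ : ℝ → ℝ, Monotone ξ → ConcaveOn ℝ Set.univ ξ →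
        Integrable (fun ω => ξ (V 4 ω)) P → Integrable (fun ω => ξ (V 3 ω)) P →
        ∫ ω, ξ (V 4 ω) ∂P ≤ ∫ ω, ξ (V 3 ω) ∂P)
    -- Y₂*, X₁, X₃,…,Xₙ (or Y₁*, X₂, X₃,…,Xₙ) have convex survival functions
    (hconvex :
      (ConvexOn ℝ (Set.Ici 0) (surv 4) ∧ ConvexOn ℝ (Set.Ici 0) (surv 0) ∧
        ConvexOn ℝ (Set.Ici 0) (surv 2)) ∨
      (ConvexOn ℝ (Set.Ici 0) (surv 3) ∧ ConvexOn ℝ (Set.Ici 0) (surv 1) ∧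
        ConvexOn ℝ (Set.Ici 0) (surv 2))) :
    -- conclusion: P(V₂ˢ > V₁ˢ) ≤ P(V₁ˢ > V₂ˢ)
    P {ω | V 4 ω > V 1 ω ∧ V 0 ω > V 1 ω ∧ V 2 ω > V 1 ω} ≤
    P {ω | V 3 ω > V 0 ω ∧ V 1 ω > V 0 ω ∧ V 2 ω > V 0 ω} := by
  have hlaw : ∀ i, IsProbabilityMeasure (P.map (V i)) := fun i =>
    Measure.isProbabilityMeasure_map (hmeas i).aemeasurable
  have hpos : ∀ i, ∀ᵐ x ∂(P.map (V i)), 0 ≤ x := fun i =>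
    (ae_map_iff (hmeas i).aemeasurable measurableSet_Ici).mpr (ae_of_all _ (hnonneg i))
  have hsurv' : ∀ i, surv i = survival (P.map (V i)) := fun i => funext fun t => by
    rw [hsurv, survival, map_measureReal_apply (hmeas i) measurableSet_Ioi]
    rfl
  have hIoi : ∀ f : ℝ → ℝ, ConvexOn ℝ (Ici 0) f → ConvexOn ℝ (Ioi 0) f := fun f h =>
    h.subset Ioi_subset_Ici_self (convex_Ioi 0)
  simp only [hsurv'] at hconvex
  have key := integral_survival_mul_mul_le_of_icvLE
    (icvLE_map (hmeas 0).aemeasurable (hmeas 1).aemeasurable hicvX)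
    (icvLE_map (hmeas 4).aemeasurable (hmeas 3).aemeasurable hicvY)
    (hpos 0) (hpos 1) (hpos 3) (hpos 4)
    (hconvex.imp (fun h => ⟨hIoi _ h.1, hIoi _ h.2.1, hIoi _ h.2.2⟩)
      (fun h => ⟨hIoi _ h.1, hIoi _ h.2.1, hIoi _ h.2.2⟩))
  have h₁ := measureReal_forall_lt_eq_integral_prod_survival hmeas hindep
    (T := {4, 0, 2}) (d := 1) (by decide)
  have h₀ := measureReal_forall_lt_eq_integral_prod_survival hmeas hindep
    (T := {3, 1, 2}) (d := 0) (by decide)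
  simp only [Fin.isValue, Finset.mem_insert, Finset.mem_singleton, forall_eq_or_imp, forall_eq,
    Fin.reduceEq, or_self, not_false_eq_true, Finset.prod_insert, Finset.prod_singleton] at h₁ h₀
  rw [← ENNReal.toReal_le_toReal (measure_ne_top _ _) (measure_ne_top _ _)]
  simpa only [gt_iff_lt, ← measureReal_def, h₁, h₀, mul_assoc] using key
end

section
/- If δ(u) = u - ω(u) and ω(u) - γ(u) are both increasing in u ≥ 0 and X has a log-concave survival function, then for each fixed t ≥ 0 the map u ↦ [F̄_X(t - δ(u)) / F̄_X(ω(u))] · F̄_X(γ(u)) is nonnegative and increasing on [0, t]. -/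
/-! Taking logarithms, the integrand is `f(t - δ u) + (f(γ u) - f(ω u))` with `f = log F̄_X`
concave and decreasing. The first summand grows with `u` because `δ` does. For the second,
`f(ω u) - f(γ u)` is the increment of `f` over `[γ u, γ u + (ω u - γ u)]`; as `u` grows the
interval moves right and gets longer, and both moves can only make the increment of a concave
decreasing function smaller. -/

open Set

section ConcaveOn

variable {𝕜 : Type*} [Field 𝕜] [LinearOrder 𝕜] [IsStrictOrderedRing 𝕜] {s : Set 𝕜} {f : 𝕜 → 𝕜}

theorem ConcaveOn.map_add_sub_map_le_of_le (hf : ConcaveOn 𝕜 s f) {x y d : 𝕜}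
    (hx : x ∈ s) (hyd : y + d ∈ s) (hxy : x ≤ y) (hd : 0 ≤ d) :
    f (y + d) - f y ≤ f (x + d) - f x := by
  rcases hd.eq_or_lt with rfl | hd
  · simp
  have hconn := hf.1.ordConnected
  have hy : y ∈ s := hconn.out hx hyd ⟨hxy, by linarith⟩
  have hxd : x + d ∈ s := hconn.out hx hyd ⟨by linarith, by linarith⟩
  -- Secant slopes of the convex `-f` increase in each endpoint.
  have h₁ : (f x - f (x + d)) / d ≤ (f x - f (y + d)) / (y + d - x) := by
    simpa [neg_add_eq_sub] using
      hf.neg.secant_mono hx hxd hyd (by linarith) (by linarith) (by linarith)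
  have h₂ : (f x - f (y + d)) / (y + d - x) ≤ (f y - f (y + d)) / d := by
    convert hf.neg.secant_mono hyd hx hy (by linarith) (by linarith) hxy using 1 <;>
      rw [← neg_div_neg_eq] <;> simp [neg_add_eq_sub]
  have h := h₁.trans h₂
  rw [div_le_div_iff_of_pos_right hd] at h
  linarith

theorem ConcaveOn.sub_le_sub_of_antitoneOn (hf : ConcaveOn 𝕜 s f) (hf' : AntitoneOn f s)
    {x x' y y' : 𝕜} (hx : x ∈ s) (hy' : y' ∈ s) (hxy : x ≤ y) (hxx' : x ≤ x')
    (hlen : x' - x ≤ y' - y) :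
    f y' - f y ≤ f x' - f x := by
  have hyd : y + (x' - x) ∈ s := hf.1.ordConnected.out hx hy' ⟨by linarith, by linarith⟩
  have hinc := hf.map_add_sub_map_le_of_le hx hyd hxy (sub_nonneg.2 hxx')
  rw [add_sub_cancel] at hinc
  linarith [hf' hyd hy' (by linarith : y + (x' - x) ≤ y')]

end ConcaveOn

theorem div_le_div_of_logConcaveOn {s : Set ℝ} {g : ℝ → ℝ} (hpos : ∀ u ∈ s, 0 < g u)
    (hanti : AntitoneOn g s) (hlog : ConcaveOn ℝ s fun u => Real.log (g u))
    {x x' y y' : ℝ} (hx : x ∈ s) (hy' : y' ∈ s) (hxy : x ≤ y) (hxx' : x ≤ x')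
    (hlen : x' - x ≤ y' - y) :
    g y' / g y ≤ g x' / g x := by
  have hconn := hlog.1.ordConnected
  have hy : y ∈ s := hconn.out hx hy' ⟨hxy, by linarith⟩
  have hx' : x' ∈ s := hconn.out hx hy' ⟨hxx', by linarith⟩
  have hlog_anti : AntitoneOn (fun u => Real.log (g u)) s := fun a ha b hb hab =>
    Real.log_le_log (hpos b hb) (hanti ha hb hab)
  rw [← Real.log_le_log_iff (div_pos (hpos y' hy') (hpos y hy))
      (div_pos (hpos x' hx') (hpos x hx)), Real.log_div (hpos y' hy').ne' (hpos y hy).ne', Real.log_div (hpos x' hx').ne' (hpos x hx).ne']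
  exact hlog.sub_le_sub_of_antitoneOn hlog_anti hx hy' hxy hxx' hlen

theorem log_concave_standby_integrand_monotone_general
    (SX : ℝ → ℝ) (γ ω : ℝ → ℝ)
    (hSX_pos : ∀ u ≥ 0, 0 < SX u) (hSX_anti : Antitone SX)
    (hlogcc : ConcaveOn ℝ (Set.Ici 0) (fun u => Real.log (SX u)))
    (hγ_mono : MonotoneOn γ (Set.Ici 0))
    (hγ_nonneg : ∀ u ≥ 0, 0 ≤ γ u) (hγω : ∀ u ≥ 0, γ u ≤ ω u)
    (hδ_mono : MonotoneOn (fun u => u - ω u) (Set.Ici 0))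
    (hωγ_mono : MonotoneOn (fun u => ω u - γ u) (Set.Ici 0)) :
    ∀ t ≥ 0,
      (∀ u ∈ Set.Icc 0 t, 0 ≤ (SX (t - (u - ω u)) / SX (ω u)) * SX (γ u)) ∧
      MonotoneOn (fun u => (SX (t - (u - ω u)) / SX (ω u)) * SX (γ u)) (Set.Icc 0 t) := by
  intro t _
  have hω_nonneg (u : ℝ) (hu : 0 ≤ u) : 0 ≤ ω u := (hγ_nonneg u hu).trans (hγω u hu)
  have hpos (u : ℝ) (hu : u ∈ Icc 0 t) :
      0 < SX (t - (u - ω u)) ∧ 0 < SX (ω u) ∧ 0 < SX (γ u) :=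
    ⟨hSX_pos _ (by linarith [hu.2, hω_nonneg u hu.1]), hSX_pos _ (hω_nonneg u hu.1),
      hSX_pos _ (hγ_nonneg u hu.1)⟩
  refine ⟨fun u hu => ?_, fun u hu v hv huv => ?_⟩
  · obtain ⟨h₁, h₂, h₃⟩ := hpos u hu
    positivity
  obtain ⟨hAu, hωu, hγu⟩ := hpos u hu
  obtain ⟨hAv, hωv, hγv⟩ := hpos v hv
  have hnum : SX (t - (u - ω u)) ≤ SX (t - (v - ω v)) :=
    hSX_anti (by linarith [hδ_mono hu.1 hv.1 huv])
  have hden : SX (ω v) / SX (γ v) ≤ SX (ω u) / SX (γ u) :=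
    div_le_div_of_logConcaveOn (fun u hu => hSX_pos u hu) (hSX_anti.antitoneOn _) hlogcc
      (hγ_nonneg u hu.1) (hω_nonneg v hv.1) (hγ_mono hu.1 hv.1 huv) (hγω u hu.1)
      (hωγ_mono hu.1 hv.1 huv)
  calc SX (t - (u - ω u)) / SX (ω u) * SX (γ u)
      = SX (t - (u - ω u)) / (SX (ω u) / SX (γ u)) := by rw [div_div_eq_mul_div, mul_div_right_comm]
    _ ≤ SX (t - (v - ω v)) / (SX (ω v) / SX (γ v)) := div_le_div₀ hAv.le hnum (by positivity) hden
    _ = SX (t - (v - ω v)) / SX (ω v) * SX (γ v) := by rw [div_div_eq_mul_div, mul_div_right_comm]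

theorem log_concave_standby_integrand_monotone
    (SX : ℝ → ℝ) (γ ω : ℝ → ℝ)
    (hSX_pos : ∀ u ≥ 0, 0 < SX u) (hSX_anti : Antitone SX)
    (hlogcc : ConcaveOn ℝ (Set.Ici 0) (fun u => Real.log (SX u)))
    (hγ_mono : MonotoneOn γ (Set.Ici 0)) (hω_mono : MonotoneOn ω (Set.Ici 0))
    (hγ_nonneg : ∀ u ≥ 0, 0 ≤ γ u) (hγω : ∀ u ≥ 0, γ u ≤ ω u) (hω_le : ∀ u ≥ 0, ω u ≤ u)
    (hδ_mono : MonotoneOn (fun u => u - ω u) (Set.Ici 0))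
    (hωγ_mono : MonotoneOn (fun u => ω u - γ u) (Set.Ici 0)) :
    ∀ t ≥ 0,
      (∀ u ∈ Set.Icc 0 t, 0 ≤ (SX (t - (u - ω u)) / SX (ω u)) * SX (γ u)) ∧
      MonotoneOn (fun u => (SX (t - (u - ω u)) / SX (ω u)) * SX (γ u)) (Set.Icc 0 t) :=
  log_concave_standby_integrand_monotone_general SX γ ω hSX_pos hSX_anti hlogcc hγ_mono hγ_nonneg
    hγω hδ_mono hωγ_mono
end

section
/- Suppose X₁⊛Y₁ and X₂⊛Y₂ share the same model functions γ, ω with δ(u) = u - ω(u) increasing and ω(u) = γ(u) for all u ≥ 0. If X₁ ≤_rhr X₂ and Y₁ ≤_st Y₂, then V₁^p ≤_st V₂^p, where V₁^p = max{X₁⊛Y₁, X₂, X₃,...,Xₙ} and V₂^p = max{X₁, X₂⊛Y₂, X₃,...,Xₙ}. -/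
/-!
Writing `F₁ = 1 - S_{X₁}`, `F₂ = 1 - S_{X₂}` and `g(u) = S_{Y₂}(t - δ(u))`, the claim reduces to
`F₂(t) ∫₀ᵗ g f₁ ≤ F₁(t) ∫₀ᵗ g f₂` (after replacing `S_{Y₁}` by the larger `S_{Y₂}`).
Here `g` is nonnegative and increasing on `[0, t]`, since `δ` is increasing and `S_{Y₂}` decreasing.
By the layer-cake formula `g(u) = ∫₀^∞ 1{s ≤ g(u)} ds` and Fubini, it suffices to integrate
`φ = F₂(t) f₁ - F₁(t) f₂` over each superlevel set `{g ≥ s} ∩ (0, t]`, which is an interval `(c, t]` up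
to a null set; there `∫_c^t φ = F₁(t) F₂(c) - F₂(t) F₁(c) ≤ 0` is the reversed hazard rate order.
-/

open MeasureTheory Set

theorem IsUpperSet.inter_Ioc_ae_eq_Ioc {U : Set ℝ} (hU : IsUpperSet U) {a b : ℝ} (hab : a ≤ b) :
    ∃ c ∈ Icc a b, (U ∩ Ioc a b : Set ℝ) =ᵐ[volume] Ioc c b := by
  set A := insert b (U ∩ Icc a b)
  have ha : a ∈ lowerBounds A := by rintro x (rfl | ⟨-, hx, -⟩) <;> assumption
  refine ⟨sInf A, ⟨le_csInf (insert_nonempty _ _) ha, csInf_le ⟨a, ha⟩ (mem_insert b _)⟩, ?_⟩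
  have hlower : U ∩ Ioc a b ⊆ Icc (sInf A) b := fun u ⟨hu, hau, hub⟩ =>
    ⟨csInf_le ⟨a, ha⟩ (mem_insert_of_mem b ⟨hu, hau.le, hub⟩), hub⟩
  have hupper : Ioo (sInf A) b ⊆ U ∩ Ioc a b := by
    rintro u ⟨hcu, hub⟩
    obtain ⟨x, hxA, hxu⟩ := exists_lt_of_csInf_lt (insert_nonempty _ _) hcu
    rcases hxA with rfl | ⟨hx, hax, -⟩
    · exact absurd hxu hub.not_gt
    · exact ⟨hU hxu.le hx, hax.trans_lt hxu, hub.le⟩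
  exact (LE.le.eventuallyLE hlower |>.trans Ioc_ae_eq_Icc.symm.le).antisymm
    ((Ioc_ae_eq_Icc.trans Ioo_ae_eq_Icc.symm).le.trans (LE.le.eventuallyLE hupper))

theorem integral_mul_nonpos_of_monotone {g φ : ℝ → ℝ} {a b : ℝ} (hab : a ≤ b) (hg : Monotone g)
    (hga : 0 ≤ g a) (hφ : IntervalIntegrable φ volume a b)
    (htail : ∀ c ∈ Icc a b, ∫ u in c..b, φ u ≤ 0) :
    ∫ u in a..b, g u * φ u ≤ 0 := by
  set ψ : ℝ × ℝ → ℝ := {p | p.2 ≤ g p.1}.indicator fun p => φ p.1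
  have hψ : Integrable ψ ((volume.restrict (Ioc a b)).prod (volume.restrict (Ioc 0 (g b)))) := by
    have : IsFiniteMeasure (volume.restrict (Ioc 0 (g b))) :=
      isFiniteMeasure_restrict.mpr measure_Ioc_lt_top.ne
    exact (((intervalIntegrable_iff_integrableOn_Ioc_of_le hab).mp hφ).comp_fst _).indicator
      (measurableSet_le measurable_snd (hg.measurable.comp measurable_fst))
  have hlayer : ∀ u ∈ Ioc a b, g u * φ u = ∫ s in Ioc 0 (g b), ψ (u, s) := fun u hu => by
    have hψu : (fun s => ψ (u, s)) = (Iic (g u)).indicator fun _ => φ u := rfl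
    rw [hψu, integral_indicator measurableSet_Iic, Measure.restrict_restrict measurableSet_Iic,
      setIntegral_const, inter_comm, Ioc_inter_Iic, min_eq_right (hg hu.2),
      Real.volume_real_Ioc_of_le (hga.trans (hg hu.1.le)), sub_zero, smul_eq_mul]
  have hslice : ∀ s, ∫ u in Ioc a b, ψ (u, s) ≤ 0 := fun s => by
    have hup : IsUpperSet {u | s ≤ g u} := fun _ _ hxy hx => le_trans hx (hg hxy)
    obtain ⟨c, hc, hae⟩ := hup.inter_Ioc_ae_eq_Ioc hab
    have hψs : (fun u => ψ (u, s)) = {u | s ≤ g u}.indicator φ := rfl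
    have hmeas : MeasurableSet {u | s ≤ g u} := measurableSet_le measurable_const hg.measurable
    rw [hψs, integral_indicator hmeas, Measure.restrict_restrict hmeas, setIntegral_congr_set hae,
      ← intervalIntegral.integral_of_le hc.2]
    exact htail c hc
  calc ∫ u in a..b, g u * φ u
      = ∫ u in Ioc a b, ∫ s in Ioc 0 (g b), ψ (u, s) := by
        rw [intervalIntegral.integral_of_le hab]
        exact setIntegral_congr_fun measurableSet_Ioc hlayer
    _ = ∫ s in Ioc 0 (g b), ∫ u in Ioc a b, ψ (u, s) := integral_integral_swap hψ
    _ ≤ 0 := integral_nonpos hslice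

theorem integral_mul_nonpos_of_monotoneOn {g φ : ℝ → ℝ} {a b : ℝ} (hab : a ≤ b)
    (hg : MonotoneOn g (Icc a b)) (hga : 0 ≤ g a) (hφ : IntervalIntegrable φ volume a b)
    (htail : ∀ c ∈ Icc a b, ∫ u in c..b, φ u ≤ 0) :
    ∫ u in a..b, g u * φ u ≤ 0 := by
  have hGg : ∀ u ∈ uIcc a b, IccExtend hab (fun u => g u) u * φ u = g u * φ u := fun u hu => by
    rw [IccExtend_of_mem hab _ (uIcc_of_le hab ▸ hu)]
  rw [← intervalIntegral.integral_congr hGg]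
  exact integral_mul_nonpos_of_monotone hab ((monotoneOn_iff_monotone.mp hg).IccExtend hab)
    (by rwa [IccExtend_left]) hφ htail

theorem MonotoneOn.intervalIntegrable_mul {g f : ℝ → ℝ} {a b : ℝ} (hg : MonotoneOn g (Icc a b))
    (hab : a ≤ b) (hf : ContinuousOn f (Icc a b)) :
    IntervalIntegrable (fun u => g u * f u) volume a b := by
  rw [← uIcc_of_le hab] at hg hf
  exact hg.intervalIntegrable.mul_continuousOn hf

theorem mul_integral_le_mul_integral_of_rhr {F₁ F₂ f₁ f₂ g : ℝ → ℝ} {a b : ℝ} (hab : a ≤ b)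
    (hF₁ : ∀ x ∈ Icc a b, HasDerivAt F₁ (f₁ x) x) (hF₂ : ∀ x ∈ Icc a b, HasDerivAt F₂ (f₂ x) x)
    (hf₁ : ContinuousOn f₁ (Icc a b)) (hf₂ : ContinuousOn f₂ (Icc a b))
    (hrhr : ∀ s ∈ Icc a b, F₁ b * F₂ s ≤ F₂ b * F₁ s)
    (hg : MonotoneOn g (Icc a b)) (hga : 0 ≤ g a) :
    F₂ b * ∫ u in a..b, g u * f₁ u ≤ F₁ b * ∫ u in a..b, g u * f₂ u := by
  set φ := fun u => F₂ b * f₁ u - F₁ b * f₂ u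
  have hφ : ContinuousOn φ (Icc a b) :=
    (continuousOn_const.mul hf₁).sub (continuousOn_const.mul hf₂)
  have htail : ∀ c ∈ Icc a b, ∫ u in c..b, φ u ≤ 0 := fun c hc => by
    have hsub : uIcc c b ⊆ Icc a b := uIcc_of_le hc.2 ▸ Icc_subset_Icc_left hc.1
    rw [intervalIntegral.integral_eq_sub_of_hasDerivAt
      (f := fun u => F₂ b * F₁ u - F₁ b * F₂ u)
      (fun x hx => ((hF₁ x (hsub hx)).const_mul _).sub ((hF₂ x (hsub hx)).const_mul _))
      ((hφ.mono hsub).intervalIntegrable)]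
    linarith [hrhr c hc]
  have key := integral_mul_nonpos_of_monotoneOn hab hg hga (hφ.intervalIntegrable_of_Icc hab) htail
  simp only [φ, mul_sub, mul_left_comm (g _)] at key
  rw [intervalIntegral.integral_sub ((hg.intervalIntegrable_mul hab hf₁).const_mul _)
    ((hg.intervalIntegrable_mul hab hf₂).const_mul _),
    intervalIntegral.integral_const_mul, intervalIntegral.integral_const_mul] at key
  linarith

theorem model_II_parallel_st_common_model_general
    (SX1 SX2 SY1 SY2 FH fX1 fX2 : ℝ → ℝ) (ω : ℝ → ℝ)
    -- densities
    (hd1 : ∀ u, HasDerivAt SX1 (-(fX1 u)) u) (hd2 : ∀ u, HasDerivAt SX2 (-(fX2 u)) u)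
    (hf1_nonneg : ∀ u, 0 ≤ fX1 u)
    (hf1_cont : Continuous fX1) (hf2_cont : Continuous fX2)
    -- survival / distribution functions
    (hSX2_bd : ∀ u, 0 ≤ SX2 u ∧ SX2 u ≤ 1)
    (hSY1_anti : Antitone SY1) (hSY2_anti : Antitone SY2)
    (hSY2_nonneg : ∀ u, 0 ≤ SY2 u)
    (hFH_nonneg : ∀ u, 0 ≤ FH u)
    -- common model functions: increasing, 0 ≤ ω(u) = γ(u) ≤ u, δ increasing
    (hδ_mono : MonotoneOn (fun u => u - ω u) (Set.Ici 0))
    -- X₁ ≤_rhr X₂ and Y₁ ≤_st Y₂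
    (hrhrX : ∀ s t : ℝ, s ≤ t → (1 - SX2 s) * (1 - SX1 t) ≤ (1 - SX2 t) * (1 - SX1 s))
    (hstY : ∀ u, SY1 u ≤ SY2 u) :
    -- conclusion: V₁ᵖ ≤_st V₂ᵖ, i.e. F_{V₂ᵖ} ≤ F_{V₁ᵖ} pointwise
    ∀ t ≥ 0,
      (1 - SX1 t) * ((1 - SX2 t) - ∫ u in (0:ℝ)..t, SY2 (t - (u - ω u)) * fX2 u) * FH t ≤
      ((1 - SX1 t) - ∫ u in (0:ℝ)..t, SY1 (t - (u - ω u)) * fX1 u) * (1 - SX2 t) * FH t := by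
  intro t ht
  have hg : ∀ {S : ℝ → ℝ}, Antitone S → MonotoneOn (fun u => S (t - (u - ω u))) (Icc 0 t) :=
    fun hS x hx y hy hxy => hS (sub_le_sub_left (hδ_mono hx.1 hy.1 hxy) t)
  have hY : ∫ u in (0:ℝ)..t, SY1 (t - (u - ω u)) * fX1 u ≤
      ∫ u in (0:ℝ)..t, SY2 (t - (u - ω u)) * fX1 u :=
    intervalIntegral.integral_mono_on ht
      ((hg hSY1_anti).intervalIntegrable_mul ht hf1_cont.continuousOn)
      ((hg hSY2_anti).intervalIntegrable_mul ht hf1_cont.continuousOn)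
      fun u _ => mul_le_mul_of_nonneg_right (hstY _) (hf1_nonneg u)
  have hX := mul_integral_le_mul_integral_of_rhr (F₁ := fun u => 1 - SX1 u)
    (F₂ := fun u => 1 - SX2 u) ht (fun u _ => by simpa using (hd1 u).const_sub 1)
    (fun u _ => by simpa using (hd2 u).const_sub 1) hf1_cont.continuousOn hf2_cont.continuousOn
    (fun s hs => by linarith [hrhrX s t hs.2]) (hg hSY2_anti) (hSY2_nonneg _)
  have hchain := (mul_le_mul_of_nonneg_left hY (sub_nonneg.mpr (hSX2_bd t).2)).trans hX
  linarith [mul_le_mul_of_nonneg_right hchain (hFH_nonneg t)]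

theorem model_II_parallel_st_common_model
    (SX1 SX2 SY1 SY2 FH fX1 fX2 : ℝ → ℝ) (γ ω : ℝ → ℝ)
    -- densities
    (hd1 : ∀ u, HasDerivAt SX1 (-(fX1 u)) u) (hd2 : ∀ u, HasDerivAt SX2 (-(fX2 u)) u)
    (hf1_nonneg : ∀ u, 0 ≤ fX1 u) (hf2_nonneg : ∀ u, 0 ≤ fX2 u)
    (hf1_cont : Continuous fX1) (hf2_cont : Continuous fX2)
    -- survival / distribution functions
    (hSX1_bd : ∀ u, 0 ≤ SX1 u ∧ SX1 u ≤ 1) (hSX2_bd : ∀ u, 0 ≤ SX2 u ∧ SX2 u ≤ 1)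
    (hSY1_anti : Antitone SY1) (hSY2_anti : Antitone SY2)
    (hSY1_nonneg : ∀ u, 0 ≤ SY1 u) (hSY2_nonneg : ∀ u, 0 ≤ SY2 u)
    (hFH_nonneg : ∀ u, 0 ≤ FH u)
    -- common model functions: increasing, 0 ≤ ω(u) = γ(u) ≤ u, δ increasing
    (hγ_mono : MonotoneOn γ (Set.Ici 0)) (hω_mono : MonotoneOn ω (Set.Ici 0))
    (hω_bd : ∀ u ≥ 0, 0 ≤ ω u ∧ ω u ≤ u) (hωγ : ∀ u ≥ 0, ω u = γ u)
    (hδ_mono : MonotoneOn (fun u => u - ω u) (Set.Ici 0))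
    -- X₁ ≤_rhr X₂ and Y₁ ≤_st Y₂
    (hrhrX : ∀ s t : ℝ, s ≤ t → (1 - SX2 s) * (1 - SX1 t) ≤ (1 - SX2 t) * (1 - SX1 s))
    (hstY : ∀ u, SY1 u ≤ SY2 u) :
    -- conclusion: V₁ᵖ ≤_st V₂ᵖ, i.e. F_{V₂ᵖ} ≤ F_{V₁ᵖ} pointwise
    ∀ t ≥ 0,
      (1 - SX1 t) * ((1 - SX2 t) - ∫ u in (0:ℝ)..t, SY2 (t - (u - ω u)) * fX2 u) * FH t ≤
      ((1 - SX1 t) - ∫ u in (0:ℝ)..t, SY1 (t - (u - ω u)) * fX1 u) * (1 - SX2 t) * FH t :=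
  model_II_parallel_st_common_model_general SX1 SX2 SY1 SY2 FH fX1 fX2 ω hd1 hd2 hf1_nonneg hf1_cont
    hf2_cont hSX2_bd hSY1_anti hSY2_anti hSY2_nonneg hFH_nonneg hδ_mono hrhrX hstY
end

section
/- Under a common model function with δ(u) = u - ω(u) increasing and ω = γ, if either (i) X₁ ≤_lr X₂ and Y₁ ≤_rhr Y₂, or (ii) X₁ ≥_lr X₂ and Y₁ ≥_rhr Y₂, then Q₁^p ≤_st Q₂^p, where Q₁^p = max{X₁⊛Y₂, X₂⊛Y₁, X₃,...,Xₙ} and Q₂^p = max{X₁⊛Y₁, X₂⊛Y₂, X₃,...,Xₙ}, with F_{X_i⊛Y_j}(t) = ∫_0^t F_{Y_j}(t-δ(u)) dF_{X_i}(u). -/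
/-! Write `φ(u) = t - δ(u)`, which is antitone since `δ` is monotone. For `u ≤ v` the likelihood
ratio order of the `X`'s and the reversed hazard rate order of the `Y`'s, evaluated at
`φ v ≤ φ u`, give the two cross differences
`FY₂(φ u) FY₁(φ v) - FY₁(φ u) FY₂(φ v)` and `fX₁(u) fX₂(v) - fX₁(v) fX₂(u)` the same sign, in
either case (i) or (ii). Integrating their product over `(0, t]²` and expanding gives twice
`F_{X₁⊛Y₂}(t) F_{X₂⊛Y₁}(t) - F_{X₁⊛Y₁}(t) F_{X₂⊛Y₂}(t)`, which is therefore nonnegative. -/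

open MeasureTheory Set

theorem integral_mul_integral_le_of_cross_nonneg {α : Type*} [MeasurableSpace α] {μ : Measure α}
    {a b p q : α → ℝ}
    (hap : Integrable (fun u => a u * p u) μ) (hbp : Integrable (fun u => b u * p u) μ)
    (haq : Integrable (fun u => a u * q u) μ) (hbq : Integrable (fun u => b u * q u) μ)
    (h : ∀ᵐ u ∂μ, ∀ᵐ v ∂μ, 0 ≤ (b u * a v - a u * b v) * (p u * q v - p v * q u)) :
    (∫ u, a u * p u ∂μ) * (∫ u, b u * q u ∂μ) ≤ (∫ u, b u * p u ∂μ) * (∫ u, a u * q u ∂μ) := by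
  set A₁ := ∫ u, a u * p u ∂μ
  set B₁ := ∫ u, b u * p u ∂μ
  set A₂ := ∫ u, a u * q u ∂μ
  set B₂ := ∫ u, b u * q u ∂μ
  have inner_eq : ∀ u, ∫ v, (b u * a v - a u * b v) * (p u * q v - p v * q u) ∂μ
      = b u * p u * A₂ - b u * q u * A₁ - a u * p u * B₂ + a u * q u * B₁ := by
    intro u
    have expand : (fun v => (b u * a v - a u * b v) * (p u * q v - p v * q u)) = fun v =>
        b u * p u * (a v * q v) - b u * q u * (a v * p v) - a u * p u * (b v * q v)
          + a u * q u * (b v * p v) := by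
      ext v; ring
    rw [expand, integral_add, integral_sub, integral_sub]
    · simp only [integral_const_mul]; rfl
    all_goals fun_prop
  have outer_eq : ∫ u, (b u * p u * A₂ - b u * q u * A₁ - a u * p u * B₂ + a u * q u * B₁) ∂μ
      = 2 * (B₁ * A₂ - A₁ * B₂) := by
    rw [integral_add, integral_sub, integral_sub]
    · simp only [integral_mul_const]; ring
    all_goals fun_prop
  have hnonneg : 0 ≤ ∫ u, ∫ v, (b u * a v - a u * b v) * (p u * q v - p v * q u) ∂μ ∂μ :=
    integral_nonneg_of_ae (h.mono fun u hu => integral_nonneg_of_ae hu)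
  simp only [inner_eq, outer_eq] at hnonneg
  linarith

theorem integrableOn_Ioc_mul_of_antitoneOn {g f : ℝ → ℝ} {a b : ℝ}
    (hg : AntitoneOn g (Icc a b)) (hf : ContinuousOn f (Icc a b)) :
    IntegrableOn (fun u => g u * f u) (Ioc a b) :=
  IntegrableOn.mul_continuousOn_of_subset
    ((hg.integrableOn_isCompact isCompact_Icc).mono_set Ioc_subset_Icc_self) hf measurableSet_Ioc
    isCompact_Icc Ioc_subset_Icc_self

theorem cross_mul_cross_nonneg_of_ratio_ordered {F₁ F₂ f₁ f₂ φ : ℝ → ℝ} {s : Set ℝ}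
    (hφ : AntitoneOn φ s)
    (h : ((∀ x y : ℝ, x ≤ y → f₂ x * f₁ y ≤ f₂ y * f₁ x) ∧
          (∀ x y : ℝ, x ≤ y → F₂ x * F₁ y ≤ F₂ y * F₁ x)) ∨
         ((∀ x y : ℝ, x ≤ y → f₁ x * f₂ y ≤ f₁ y * f₂ x) ∧
          (∀ x y : ℝ, x ≤ y → F₁ x * F₂ y ≤ F₁ y * F₂ x)))
    {u v : ℝ} (hu : u ∈ s) (hv : v ∈ s) :
    0 ≤ (F₂ (φ u) * F₁ (φ v) - F₁ (φ u) * F₂ (φ v)) * (f₁ u * f₂ v - f₁ v * f₂ u) := by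
  wlog huv : u ≤ v generalizing u v
  · convert this hv hu (le_of_not_ge huv) using 1; ring
  have hφuv := hφ hu hv huv
  rcases h with ⟨hf, hF⟩ | ⟨hf, hF⟩
  · exact mul_nonneg (by linarith [hF _ _ hφuv]) (by linarith [hf u v huv])
  · exact mul_nonneg_of_nonpos_of_nonpos (by linarith [hF _ _ hφuv]) (by linarith [hf u v huv])

theorem model_III_parallel_st_general
    (FY1 FY2 FH fX1 fX2 : ℝ → ℝ) (ω : ℝ → ℝ)
    -- densities of X₁, X₂
    (hf1_cont : Continuous fX1) (hf2_cont : Continuous fX2)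
    -- distribution functions of Y₁, Y₂ and of H₂
    (hFY1_mono : Monotone FY1) (hFY2_mono : Monotone FY2)
    (hFH_nonneg : ∀ u, 0 ≤ FH u)
    (hδ_mono : MonotoneOn (fun u => u - ω u) (Set.Ici 0))
    -- (i) X₁ ≤_lr X₂ and Y₁ ≤_rhr Y₂, or (ii) X₁ ≥_lr X₂ and Y₁ ≥_rhr Y₂
    (hcase :
      ((∀ s t : ℝ, s ≤ t → fX2 s * fX1 t ≤ fX2 t * fX1 s) ∧
       (∀ s t : ℝ, s ≤ t → FY2 s * FY1 t ≤ FY2 t * FY1 s)) ∨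
      ((∀ s t : ℝ, s ≤ t → fX1 s * fX2 t ≤ fX1 t * fX2 s) ∧
       (∀ s t : ℝ, s ≤ t → FY1 s * FY2 t ≤ FY1 t * FY2 s))) :
    -- conclusion: Q₁ᵖ ≤_st Q₂ᵖ, i.e. F_{Q₂ᵖ} ≤ F_{Q₁ᵖ} pointwise
    ∀ t ≥ 0,
      FH t * (∫ u in (0:ℝ)..t, FY1 (t - (u - ω u)) * fX1 u) *
             (∫ u in (0:ℝ)..t, FY2 (t - (u - ω u)) * fX2 u) ≤
      FH t * (∫ u in (0:ℝ)..t, FY2 (t - (u - ω u)) * fX1 u) *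
             (∫ u in (0:ℝ)..t, FY1 (t - (u - ω u)) * fX2 u) := by
  intro t ht
  have hφ : AntitoneOn (fun u => t - (u - ω u)) (Ici 0) :=
    fun u hu v hv huv => sub_le_sub_left (hδ_mono hu hv huv) t
  have hint : ∀ {F f : ℝ → ℝ}, Monotone F → Continuous f →
      IntegrableOn (fun u => F (t - (u - ω u)) * f u) (Ioc 0 t) := fun hF hf =>
    integrableOn_Ioc_mul_of_antitoneOn (hF.comp_antitoneOn (hφ.mono Icc_subset_Ici_self))
      hf.continuousOn
  have hcross : ∀ᵐ u ∂volume.restrict (Ioc 0 t), ∀ᵐ v ∂volume.restrict (Ioc 0 t),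
      0 ≤ (FY2 (t - (u - ω u)) * FY1 (t - (v - ω v)) - FY1 (t - (u - ω u)) * FY2 (t - (v - ω v)))
        * (fX1 u * fX2 v - fX1 v * fX2 u) := by
    filter_upwards [ae_restrict_mem measurableSet_Ioc] with u hu
    filter_upwards [ae_restrict_mem measurableSet_Ioc] with v hv
    exact cross_mul_cross_nonneg_of_ratio_ordered (hφ.mono fun _ h => h.1.le) hcase hu hv
  have key := integral_mul_integral_le_of_cross_nonneg (hint hFY1_mono hf1_cont)
    (hint hFY2_mono hf1_cont) (hint hFY1_mono hf2_cont) (hint hFY2_mono hf2_cont) hcross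
  simp only [intervalIntegral.integral_of_le ht, mul_assoc]
  exact mul_le_mul_of_nonneg_left key (hFH_nonneg t)

theorem model_III_parallel_st
    (FY1 FY2 FH fX1 fX2 : ℝ → ℝ) (γ ω : ℝ → ℝ)
    -- densities of X₁, X₂
    (hf1_nonneg : ∀ u, 0 ≤ fX1 u) (hf2_nonneg : ∀ u, 0 ≤ fX2 u)
    (hf1_cont : Continuous fX1) (hf2_cont : Continuous fX2)
    -- distribution functions of Y₁, Y₂ and of H₂
    (hFY1_mono : Monotone FY1) (hFY2_mono : Monotone FY2)
    (hFY1_nonneg : ∀ u, 0 ≤ FY1 u) (hFY2_nonneg : ∀ u, 0 ≤ FY2 u)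
    (hFH_nonneg : ∀ u, 0 ≤ FH u)
    -- common model functions: increasing, 0 ≤ ω(u) = γ(u) ≤ u, δ increasing
    (hγ_mono : MonotoneOn γ (Set.Ici 0)) (hω_mono : MonotoneOn ω (Set.Ici 0))
    (hω_bd : ∀ u ≥ 0, 0 ≤ ω u ∧ ω u ≤ u) (hωγ : ∀ u ≥ 0, ω u = γ u)
    (hδ_mono : MonotoneOn (fun u => u - ω u) (Set.Ici 0))
    -- (i) X₁ ≤_lr X₂ and Y₁ ≤_rhr Y₂, or (ii) X₁ ≥_lr X₂ and Y₁ ≥_rhr Y₂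
    (hcase :
      ((∀ s t : ℝ, s ≤ t → fX2 s * fX1 t ≤ fX2 t * fX1 s) ∧
       (∀ s t : ℝ, s ≤ t → FY2 s * FY1 t ≤ FY2 t * FY1 s)) ∨
      ((∀ s t : ℝ, s ≤ t → fX1 s * fX2 t ≤ fX1 t * fX2 s) ∧
       (∀ s t : ℝ, s ≤ t → FY1 s * FY2 t ≤ FY1 t * FY2 s))) :
    -- conclusion: Q₁ᵖ ≤_st Q₂ᵖ, i.e. F_{Q₂ᵖ} ≤ F_{Q₁ᵖ} pointwise
    ∀ t ≥ 0,
      FH t * (∫ u in (0:ℝ)..t, FY1 (t - (u - ω u)) * fX1 u) *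
             (∫ u in (0:ℝ)..t, FY2 (t - (u - ω u)) * fX2 u) ≤
      FH t * (∫ u in (0:ℝ)..t, FY2 (t - (u - ω u)) * fX1 u) *
             (∫ u in (0:ℝ)..t, FY1 (t - (u - ω u)) * fX2 u) :=
  model_III_parallel_st_general FY1 FY2 FH fX1 fX2 ω hf1_cont hf2_cont hFY1_mono hFY2_mono
    hFH_nonneg hδ_mono hcase
end

section
/- If Y₂ ≤_hr Y₁ and Y₂ has a log-concave (log-convex) survival function, and ω₁(u) ≤ ω₂(u) (resp. ω₁(u) ≥ ω₂(u)) for all u ≥ 0, then for all 0 ≤ u ≤ t: F̄_{Y₁}(t - δ₁(u)) / F̄_{Y₁}(ω₁(u)) ≥ F̄_{Y₂}(t - δ₂(u)) / F̄_{Y₂}(ω₂(u)), where δ_i(u) = u - ω_i(u). -/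
/-! Log-concavity of `F̄₂` means its log has decreasing increments, so the conditional survival
`F̄₂(x + h) / F̄₂(x)` is decreasing in `x` (increasing in the log-convex case). Writing
`t - δᵢ(u) = ωᵢ(u) + h` with `h = t - u ≥ 0`, the ordering of `ω₁(u)` and `ω₂(u)` therefore gives
`F̄₂(ω₂ + h) / F̄₂(ω₂) ≤ F̄₂(ω₁ + h) / F̄₂(ω₁)`, and the hazard rate order replaces `F̄₂` by
`F̄₁` at the point `ω₁`. -/

open Real

section Increments

variable {𝕜 : Type*} [Field 𝕜] [LinearOrder 𝕜] [IsStrictOrderedRing 𝕜] {s : Set 𝕜} {f : 𝕜 → 𝕜}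
  {x y h : 𝕜}

theorem ConvexOn.map_add_sub_map_le (hf : ConvexOn 𝕜 s f) (hx : x ∈ s) (hyh : y + h ∈ s)
    (hxy : x ≤ y) (hh : 0 ≤ h) : f (x + h) - f x ≤ f (y + h) - f y := by
  rcases hh.eq_or_lt with rfl | hh
  · simp
  have hd : 0 < y + h - x := by linarith
  -- `x + h` and `y` are the two mirror-image convex combinations of `x` and `y + h`
  have hwx : 0 ≤ (y - x) / (y + h - x) := div_nonneg (by linarith) hd.le
  have hwy : 0 ≤ h / (y + h - x) := div_nonneg hh.le hd.le
  have hsum : (y - x) / (y + h - x) + h / (y + h - x) = 1 := by field_simp; ring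
  have hxh := hf.2 hx hyh hwx hwy hsum
  have hy := hf.2 hx hyh hwy hwx (by rwa [add_comm])
  simp only [smul_eq_mul] at hxh hy
  rw [show (y - x) / (y + h - x) * x + h / (y + h - x) * (y + h) = x + h by field_simp; ring]
    at hxh
  rw [show h / (y + h - x) * x + (y - x) / (y + h - x) * (y + h) = y by field_simp; ring] at hy
  linear_combination hxh + hy + (f x + f (y + h)) * hsum

theorem ConcaveOn.map_add_sub_map_le (hf : ConcaveOn 𝕜 s f) (hx : x ∈ s) (hyh : y + h ∈ s)
    (hxy : x ≤ y) (hh : 0 ≤ h) : f (y + h) - f y ≤ f (x + h) - f x := by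
  have := hf.neg.map_add_sub_map_le hx hyh hxy hh
  simp only [Pi.neg_apply] at this
  linarith

end Increments

section LogConcave

variable {s : Set ℝ} {F : ℝ → ℝ} {x y h : ℝ}

theorem div_map_add_le_of_concaveOn_log (hF : ∀ z ∈ s, 0 < F z)
    (hlog : ConcaveOn ℝ s fun z ↦ log (F z)) (hx : x ∈ s) (hyh : y + h ∈ s) (hxy : x ≤ y)
    (hh : 0 ≤ h) : F (y + h) / F y ≤ F (x + h) / F x := by
  have hIcc := hlog.1.ordConnected.out hx hyh
  have hy : y ∈ s := hIcc ⟨hxy, by linarith⟩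
  have hxh : x + h ∈ s := hIcc ⟨by linarith, by linarith⟩
  have hpos : ∀ z ∈ s, F z ≠ 0 := fun z hz ↦ (hF z hz).ne'
  rw [← log_le_log_iff (div_pos (hF _ hyh) (hF _ hy)) (div_pos (hF _ hxh) (hF _ hx)),
    log_div (hpos _ hyh) (hpos _ hy), log_div (hpos _ hxh) (hpos _ hx)]
  exact hlog.map_add_sub_map_le hx hyh hxy hh

theorem div_map_add_le_of_convexOn_log (hF : ∀ z ∈ s, 0 < F z)
    (hlog : ConvexOn ℝ s fun z ↦ log (F z)) (hx : x ∈ s) (hyh : y + h ∈ s) (hxy : x ≤ y)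
    (hh : 0 ≤ h) : F (x + h) / F x ≤ F (y + h) / F y := by
  have hIcc := hlog.1.ordConnected.out hx hyh
  have hy : y ∈ s := hIcc ⟨hxy, by linarith⟩
  have hxh : x + h ∈ s := hIcc ⟨by linarith, by linarith⟩
  have hpos : ∀ z ∈ s, F z ≠ 0 := fun z hz ↦ (hF z hz).ne'
  rw [← log_le_log_iff (div_pos (hF _ hxh) (hF _ hx)) (div_pos (hF _ hyh) (hF _ hy)),
    log_div (hpos _ hyh) (hpos _ hy), log_div (hpos _ hxh) (hpos _ hx)]
  exact hlog.map_add_sub_map_le hx hyh hxy hh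

end LogConcave

theorem hr_logconcave_conditional_survival_compare_general
    (SY1 SY2 : ℝ → ℝ) (ω1 ω2 : ℝ → ℝ)
    (hSY1_pos : ∀ u ≥ 0, 0 < SY1 u) (hSY2_pos : ∀ u ≥ 0, 0 < SY2 u)
    (hω1_bd : ∀ u ≥ 0, 0 ≤ ω1 u ∧ ω1 u ≤ u) (hω2_bd : ∀ u ≥ 0, 0 ≤ ω2 u ∧ ω2 u ≤ u)
    -- Y₂ ≤_hr Y₁ : F̄_{Y₁}/F̄_{Y₂} increasing
    (hhr : ∀ s t : ℝ, s ≤ t → SY1 s * SY2 t ≤ SY1 t * SY2 s)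
    -- Y₂ has a log-concave (resp. log-convex) survival function, with ω₁ ≤ ω₂ (resp. ω₁ ≥ ω₂)
    (hcase :
      (ConcaveOn ℝ (Set.Ici 0) (fun u => Real.log (SY2 u)) ∧ ∀ u ≥ 0, ω1 u ≤ ω2 u) ∨
      (ConvexOn ℝ (Set.Ici 0) (fun u => Real.log (SY2 u)) ∧ ∀ u ≥ 0, ω2 u ≤ ω1 u)) :
    ∀ u t : ℝ, 0 ≤ u → u ≤ t →
      SY2 (t - (u - ω2 u)) / SY2 (ω2 u) ≤ SY1 (t - (u - ω1 u)) / SY1 (ω1 u) := by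
  intro u t hu hut
  obtain ⟨hω1, -⟩ := hω1_bd u hu
  obtain ⟨hω2, -⟩ := hω2_bd u hu
  have hh : 0 ≤ t - u := by linarith
  rw [show t - (u - ω1 u) = ω1 u + (t - u) by ring, show t - (u - ω2 u) = ω2 u + (t - u) by ring]
  have hshape : SY2 (ω2 u + (t - u)) / SY2 (ω2 u) ≤ SY2 (ω1 u + (t - u)) / SY2 (ω1 u) := by
    rcases hcase with ⟨hconcave, hle⟩ | ⟨hconvex, hle⟩
    · exact div_map_add_le_of_concaveOn_log hSY2_pos hconcave hω1
        (Set.mem_Ici.2 (by linarith)) (hle u hu) hh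
    · exact div_map_add_le_of_convexOn_log hSY2_pos hconvex hω2
        (Set.mem_Ici.2 (by linarith)) (hle u hu) hh
  have hhazard : SY2 (ω1 u + (t - u)) / SY2 (ω1 u) ≤ SY1 (ω1 u + (t - u)) / SY1 (ω1 u) := by
    rw [div_le_div_iff₀ (hSY2_pos _ hω1) (hSY1_pos _ hω1)]
    linarith [hhr (ω1 u) (ω1 u + (t - u)) (by linarith)]
  exact hshape.trans hhazard

theorem hr_logconcave_conditional_survival_compare
    (SY1 SY2 : ℝ → ℝ) (ω1 ω2 : ℝ → ℝ)
    (hSY1_pos : ∀ u ≥ 0, 0 < SY1 u) (hSY2_pos : ∀ u ≥ 0, 0 < SY2 u)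
    (hSY1_anti : Antitone SY1) (hSY2_anti : Antitone SY2)
    (hω1_mono : MonotoneOn ω1 (Set.Ici 0)) (hω2_mono : MonotoneOn ω2 (Set.Ici 0))
    (hω1_bd : ∀ u ≥ 0, 0 ≤ ω1 u ∧ ω1 u ≤ u) (hω2_bd : ∀ u ≥ 0, 0 ≤ ω2 u ∧ ω2 u ≤ u)
    -- Y₂ ≤_hr Y₁ : F̄_{Y₁}/F̄_{Y₂} increasing
    (hhr : ∀ s t : ℝ, s ≤ t → SY1 s * SY2 t ≤ SY1 t * SY2 s)
    -- Y₂ has a log-concave (resp. log-convex) survival function, with ω₁ ≤ ω₂ (resp. ω₁ ≥ ω₂)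
    (hcase :
      (ConcaveOn ℝ (Set.Ici 0) (fun u => Real.log (SY2 u)) ∧ ∀ u ≥ 0, ω1 u ≤ ω2 u) ∨
      (ConvexOn ℝ (Set.Ici 0) (fun u => Real.log (SY2 u)) ∧ ∀ u ≥ 0, ω2 u ≤ ω1 u)) :
    ∀ u t : ℝ, 0 ≤ u → u ≤ t →
      SY2 (t - (u - ω2 u)) / SY2 (ω2 u) ≤ SY1 (t - (u - ω1 u)) / SY1 (ω1 u) :=
  hr_logconcave_conditional_survival_compare_general SY1 SY2 ω1 ω2 hSY1_pos hSY2_pos hω1_bd hω2_bd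
    hhr hcase
end

section
/- Let X₁,...,Xₙ and Y₁, Y₂ be independent exponential random variables with rates λ₁ ≥ λ₂ (for X₁, X₂) and 0 < μ₁ ≤ μ₂ (for Y₁, Y₂), and take γ_j(u) = a_j u, ω_j(u) = b_j u with 0 < a₁ ≤ a₂ ≤ b₁ ≤ b₂ ≤ 1. Then X₁ ≤_hr X₂, Y₂ ≤_hr Y₁, γ₁ ≤ γ₂, ω₁ ≤ ω₂, and Y₁, Y₂ have log-concave survival functions; consequently V₂^s ≤_st V₁^s where V₁^s = min{X₁⊛Y₁, X₂, X₃,...,Xₙ} and V₂^s = min{X₁, X₂⊛Y₂, X₃,...,Xₙ}. -/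
/-! By memorylessness the switching time ω drops out of the standby density of two exponential
lifetimes: `(λ, μ, a, b)` contributes `λ e^{-(λu + μ(t-u) + μau)}` at `u ≤ t`. After cancelling
`e^{-(λ₁+λ₂)t}` the two systems compare pointwise in `u`: the prefactors satisfy `λ₂ ≤ λ₁` and the
exponents differ by `(λ₁ - λ₂ + μ₂ - μ₁)(t - u) + (μ₂a₂ - μ₁a₁)u ≥ 0`. -/

open Real

lemma exp_neg_mul_mul_exp_neg_mul_le {α β s t : ℝ} (hαβ : α ≤ β) (hst : s ≤ t) :
    exp (-α * s) * exp (-β * t) ≤ exp (-α * t) * exp (-β * s) := by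
  rw [← exp_add, ← exp_add, exp_le_exp]
  nlinarith [mul_le_mul_of_nonneg_left hst (sub_nonneg.2 hαβ)]

lemma concaveOn_log_exp_neg_mul (m : ℝ) {s : Set ℝ} (hs : Convex ℝ s) :
    ConcaveOn ℝ s (fun t => log (exp (-m * t))) := by
  simp only [log_exp]
  exact (LinearMap.mulLeft ℝ (-m)).concaveOn hs

/-- The integrand of the standby survival function `F̄_{X⊛Y}` for `X ~ Exp(lam)`, `Y ~ Exp(mu)`,
`γ(u) = a u` and `ω(u) = b u`. -/
noncomputable def expStandbyDensity (lam mu a b t u : ℝ) : ℝ :=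
  (exp (-mu * (t - (u - b * u))) / exp (-mu * (b * u))) * exp (-mu * (a * u)) *
    (lam * exp (-lam * u))

lemma expStandbyDensity_eq (lam mu a b t u : ℝ) :
    expStandbyDensity lam mu a b t u = lam * exp (-(lam * u + mu * (t - u) + mu * a * u)) := by
  rw [expStandbyDensity, ← exp_sub, ← exp_add, mul_left_comm, ← exp_add]
  ring_nf

lemma exp_mul_expStandbyDensity_le {lam1 lam2 mu1 mu2 a1 a2 b1 b2 t u : ℝ}
    (hlam2 : 0 ≤ lam2) (hlam : lam2 ≤ lam1) (hmu2 : 0 ≤ mu2) (hmu : mu1 ≤ mu2)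
    (ha1 : 0 ≤ a1) (ha : a1 ≤ a2) (hu : 0 ≤ u) (hut : u ≤ t) :
    exp (-lam1 * t) * expStandbyDensity lam2 mu2 a2 b2 t u ≤
      expStandbyDensity lam1 mu1 a1 b1 t u * exp (-lam2 * t) := by
  rw [expStandbyDensity_eq, expStandbyDensity_eq, mul_left_comm, ← exp_add, mul_assoc lam1,
    ← exp_add]
  refine mul_le_mul hlam (exp_le_exp.2 ?_) (exp_pos _).le (hlam2.trans hlam)
  have hmua : mu1 * a1 ≤ mu2 * a2 := mul_le_mul hmu ha ha1 hmu2
  nlinarith [mul_le_mul_of_nonneg_left (sub_nonneg.2 hut) (sub_nonneg.2 hmu),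
    mul_le_mul_of_nonneg_left (sub_nonneg.2 hut) (sub_nonneg.2 hlam),
    mul_le_mul_of_nonneg_right hmua hu]

lemma continuous_expStandbyDensity (lam mu a b t : ℝ) :
    Continuous (expStandbyDensity lam mu a b t) := by
  simp only [funext (expStandbyDensity_eq lam mu a b t)]
  fun_prop

lemma exp_mul_integral_expStandbyDensity_le {lam1 lam2 mu1 mu2 a1 a2 b1 b2 t : ℝ}
    (hlam2 : 0 ≤ lam2) (hlam : lam2 ≤ lam1) (hmu2 : 0 ≤ mu2) (hmu : mu1 ≤ mu2)
    (ha1 : 0 ≤ a1) (ha : a1 ≤ a2) (ht : 0 ≤ t) :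
    exp (-lam1 * t) * ∫ u in (0:ℝ)..t, expStandbyDensity lam2 mu2 a2 b2 t u ≤
      (∫ u in (0:ℝ)..t, expStandbyDensity lam1 mu1 a1 b1 t u) * exp (-lam2 * t) := by
  rw [← intervalIntegral.integral_const_mul, ← intervalIntegral.integral_mul_const]
  refine intervalIntegral.integral_mono_on ht
    (((continuous_expStandbyDensity _ _ _ _ _).const_mul _).intervalIntegrable _ _)
    (((continuous_expStandbyDensity _ _ _ _ _).mul_const _).intervalIntegrable _ _) ?_
  rintro u ⟨hu, hut⟩
  exact exp_mul_expStandbyDensity_le hlam2 hlam hmu2 hmu ha1 ha hu hut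

theorem exponential_standby_series_example_general
    (lam1 lam2 mu1 mu2 a1 a2 b1 b2 c : ℝ)
    (hlam2 : 0 < lam2) (hlam : lam2 ≤ lam1)
    (hmu1 : 0 < mu1) (hmu : mu1 ≤ mu2)
    (ha1 : 0 < a1) (ha12 : a1 ≤ a2) (hb12 : b1 ≤ b2) :
    -- X₁ ≤_hr X₂
    (∀ s t : ℝ, s ≤ t →
        exp (-lam2 * s) * exp (-lam1 * t) ≤ exp (-lam2 * t) * exp (-lam1 * s)) ∧
    -- Y₂ ≤_hr Y₁
    (∀ s t : ℝ, s ≤ t →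
        exp (-mu1 * s) * exp (-mu2 * t) ≤ exp (-mu1 * t) * exp (-mu2 * s)) ∧
    -- γ₁ ≤ γ₂ and ω₁ ≤ ω₂
    (∀ u ≥ (0:ℝ), a1 * u ≤ a2 * u) ∧ (∀ u ≥ (0:ℝ), b1 * u ≤ b2 * u) ∧
    -- Y₁, Y₂ have log-concave survival functions
    ConcaveOn ℝ (Set.Ici 0) (fun t => Real.log (exp (-mu1 * t))) ∧
    ConcaveOn ℝ (Set.Ici 0) (fun t => Real.log (exp (-mu2 * t))) ∧
    -- hence V₂ˢ ≤_st V₁ˢ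
    (∀ t ≥ (0:ℝ),
      exp (-lam1 * t) *
        (exp (-lam2 * t) + ∫ u in (0:ℝ)..t,
          (exp (-mu2 * (t - (u - b2 * u))) / exp (-mu2 * (b2 * u))) *
            exp (-mu2 * (a2 * u)) * (lam2 * exp (-lam2 * u))) * exp (-c * t) ≤
      (exp (-lam1 * t) + ∫ u in (0:ℝ)..t,
          (exp (-mu1 * (t - (u - b1 * u))) / exp (-mu1 * (b1 * u))) *
            exp (-mu1 * (a1 * u)) * (lam1 * exp (-lam1 * u))) *
        exp (-lam2 * t) * exp (-c * t)) := by
  refine ⟨fun s t => exp_neg_mul_mul_exp_neg_mul_le hlam,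
    fun s t => exp_neg_mul_mul_exp_neg_mul_le hmu,
    fun u hu => mul_le_mul_of_nonneg_right ha12 hu,
    fun u hu => mul_le_mul_of_nonneg_right hb12 hu,
    concaveOn_log_exp_neg_mul mu1 (convex_Ici 0),
    concaveOn_log_exp_neg_mul mu2 (convex_Ici 0), fun t ht => ?_⟩
  have hstandby := exp_mul_integral_expStandbyDensity_le (b1 := b1) (b2 := b2)
    hlam2.le hlam (hmu1.le.trans hmu) hmu ha1.le ha12 ht
  refine mul_le_mul_of_nonneg_right ?_ (exp_pos _).le
  rw [mul_add, add_mul, mul_comm (exp (-lam1 * t))]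
  exact add_le_add le_rfl hstandby

theorem exponential_standby_series_example
    (lam1 lam2 mu1 mu2 a1 a2 b1 b2 c : ℝ)
    (hlam2 : 0 < lam2) (hlam : lam2 ≤ lam1)
    (hmu1 : 0 < mu1) (hmu : mu1 ≤ mu2)
    (ha1 : 0 < a1) (ha12 : a1 ≤ a2) (ha2b1 : a2 ≤ b1) (hb12 : b1 ≤ b2) (hb2 : b2 ≤ 1)
    (hc : 0 ≤ c) :
    -- X₁ ≤_hr X₂
    (∀ s t : ℝ, s ≤ t →
        exp (-lam2 * s) * exp (-lam1 * t) ≤ exp (-lam2 * t) * exp (-lam1 * s)) ∧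
    -- Y₂ ≤_hr Y₁
    (∀ s t : ℝ, s ≤ t →
        exp (-mu1 * s) * exp (-mu2 * t) ≤ exp (-mu1 * t) * exp (-mu2 * s)) ∧
    -- γ₁ ≤ γ₂ and ω₁ ≤ ω₂
    (∀ u ≥ (0:ℝ), a1 * u ≤ a2 * u) ∧ (∀ u ≥ (0:ℝ), b1 * u ≤ b2 * u) ∧
    -- Y₁, Y₂ have log-concave survival functions
    ConcaveOn ℝ (Set.Ici 0) (fun t => Real.log (exp (-mu1 * t))) ∧
    ConcaveOn ℝ (Set.Ici 0) (fun t => Real.log (exp (-mu2 * t))) ∧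
    -- hence V₂ˢ ≤_st V₁ˢ
    (∀ t ≥ (0:ℝ),
      exp (-lam1 * t) *
        (exp (-lam2 * t) + ∫ u in (0:ℝ)..t,
          (exp (-mu2 * (t - (u - b2 * u))) / exp (-mu2 * (b2 * u))) *
            exp (-mu2 * (a2 * u)) * (lam2 * exp (-lam2 * u))) * exp (-c * t) ≤
      (exp (-lam1 * t) + ∫ u in (0:ℝ)..t,
          (exp (-mu1 * (t - (u - b1 * u))) / exp (-mu1 * (b1 * u))) *
            exp (-mu1 * (a1 * u)) * (lam1 * exp (-lam1 * u))) *
        exp (-lam2 * t) * exp (-c * t)) :=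
  exponential_standby_series_example_general lam1 lam2 mu1 mu2 a1 a2 b1 b2 c hlam2 hlam hmu1 hmu ha1
    ha12 hb12
end
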